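/- arXiv:1610.03999 — 5 statements merged into one kernel-verified Lean document; each statement's English description precedes it below -/
import Mathlib

section
/- Let B be a graph of odd-girth 2k+1 and let (B̃, d_B) be a k-partial distance graph of B having the all k-good triple property. Then every K_4-minor-free graph of odd-girth at least 2k+1 admits a homomorphism to B. -/
open SimpleGraph

/-- `G` has odd-girth at least `n`: every odd cycle has length at least `n`. -/
def oddGirthAtLeast {V : Type*} (G : SimpleGraph V) (n : ℕ) : Prop :=
  ∀ (x : V) (w : G.Walk x x), w.IsCycle → Odd w.length → n ≤ w.length

/-- `G` has odd-girth exactly `n`. -/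
def hasOddGirth {V : Type*} (G : SimpleGraph V) (n : ℕ) : Prop :=
  oddGirthAtLeast G n ∧ ∃ (x : V) (w : G.Walk x x), w.IsCycle ∧ w.length = n

/-- A triple `{p,q,r}` of integers in `[1,k]` is `k`-good: if `p+q+r` is odd it is
at least `2k+1`; if it is even, the triangular inequalities hold. -/
def kGoodTriple (k p q r : ℕ) : Prop :=
  1 ≤ p ∧ p ≤ k ∧ 1 ≤ q ∧ q ≤ k ∧ 1 ≤ r ∧ r ≤ k ∧
  (Odd (p + q + r) → 2*k+1 ≤ p + q + r) ∧
  (Even (p + q + r) → p ≤ q + r ∧ q ≤ p + r ∧ r ≤ p + q)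

/-- `Bt` is a `k`-partial distance graph of `B`: a graph on the vertices of `B`
whose edges `xy` carry weight `d_B(x,y) ≤ k`. -/
def IsPartialDistGraph {V : Type*} (B Bt : SimpleGraph V) (k : ℕ) : Prop :=
  ∀ x y, Bt.Adj x y → B.dist x y ≤ k

/-- The all `k`-good triple property of a `k`-partial distance graph `Bt` of `B`:
`Bt` has an edge, and for every edge `xy` of `Bt` with `d_B(x,y) = p` and every
`k`-good triple `{p,q,r}`, there are vertices `z₁, z₂` joined to `x` and `y` in `Bt`
with `d_B(x,z₁) = q`, `d_B(y,z₁) = r`, `d_B(x,z₂) = r`, `d_B(y,z₂) = q`. -/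
def AllKGoodTripleProp {V : Type*} (B Bt : SimpleGraph V) (k : ℕ) : Prop :=
  (∃ x y, Bt.Adj x y) ∧
  ∀ x y, Bt.Adj x y → ∀ q r, kGoodTriple k (B.dist x y) q r →
    ∃ z₁ z₂, Bt.Adj x z₁ ∧ Bt.Adj y z₁ ∧ Bt.Adj x z₂ ∧ Bt.Adj y z₂ ∧
      B.dist x z₁ = q ∧ B.dist y z₁ = r ∧ B.dist x z₂ = r ∧ B.dist y z₂ = q

/-- `G` has a `K₄` minor: there are four nonempty, pairwise disjoint, connected
branch sets with an edge of `G` between every two of them. -/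
def HasK4Minor {V : Type*} (G : SimpleGraph V) : Prop :=
  ∃ S : Fin 4 → Set V,
    (∀ i, (S i).Nonempty) ∧
    (∀ i, (G.induce (S i)).Connected) ∧
    (Pairwise fun i j => Disjoint (S i) (S j)) ∧
    (Pairwise fun i j => ∃ a ∈ S i, ∃ b ∈ S j, G.Adj a b)

/-!
Two ingredients.

*Degeneracy.* A rooted form of Dirac's lemma: if every vertex with a neighbour has degree at
least three, except possibly the ends of a root edge `uv` (or a root vertex), and some edge
avoids the root, then there is a `K₄` minor. The induction is on the support: an edge in no
triangle is contracted; an edge `x₁x₂` with two common neighbours either yields a `K₄` minor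
directly or is a 2-separator, and the side avoiding `uv` is a smaller instance rooted at `x₁x₂`;
otherwise the neighbourhood of an inner vertex is a matching and a triangle is contracted. Hence
every `K₄`-minor-free graph with an edge has a vertex of degree one or two.

*Extension.* Edges `ab` of `G` are sent to edges of `Bt` of weight `min(d_G(a,b), k)`,
vertex by vertex. Remove a vertex `z` of degree at most two, joining its two neighbours `x, y`
(this contracts `zx`, so no `K₄` minor appears); map the rest, then re-insert `z`. Since `G`
has odd girth at least `2k+1`, the capped distances of `x, y, z` form a `k`-good triple, so the
all `k`-good triple property provides the image of `z`. Edges of `G` get weight one and so go to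
edges of `B`.
-/

namespace Set

variable {α : Type*} {s : Set α}

theorem three_le_encard_of_mem {a b c : α} (ha : a ∈ s) (hb : b ∈ s) (hc : c ∈ s)
    (hab : a ≠ b) (hac : a ≠ c) (hbc : b ≠ c) : 3 ≤ s.encard :=
  (encard_eq_three.mpr ⟨a, b, c, hab, hac, hbc, rfl⟩).symm.le.trans
    (encard_le_encard (by simp [insert_subset_iff, ha, hb, hc]))

theorem exists_mem_ne_ne_of_three_le_encard (h : 3 ≤ s.encard) (a b : α) :
    ∃ c ∈ s, c ≠ a ∧ c ≠ b := by
  by_contra! hs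
  have : s.encard ≤ 2 := calc
    s.encard ≤ ({a, b} : Set α).encard := encard_le_encard fun c hc => by
      by_cases hca : c = a
      · exact Or.inl hca
      · exact Or.inr (hs c hc hca)
    _ ≤ ({b} : Set α).encard + 1 := encard_insert_le _ _
    _ = 2 := by rw [encard_singleton]; rfl
  exact absurd (h.trans this) (by decide)

end Set

section Minors

variable {W W' : Type*} {J J' : SimpleGraph W}

theorem HasK4Minor.mono (hJ : J ≤ J') : HasK4Minor J → HasK4Minor J' := by
  rintro ⟨S, hne, hconn, hdisj, hadj⟩
  refine ⟨S, hne, fun i => (hconn i).mono (comap_monotone (Function.Embedding.subtype _) hJ),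
    hdisj, fun i j hij => ?_⟩
  obtain ⟨a, ha, b, hb, hab⟩ := hadj hij
  exact ⟨a, ha, b, hb, hJ hab⟩

theorem reachable_induce_preimage_of_map {f : W → W'}
    (hf : ∀ w, (J.induce (f ⁻¹' {w})).Preconnected) {T : Set W'} {s t : T}
    (p : ((J.map f).induce T).Walk s t) :
    ∀ (a b : W) (ha : a ∈ f ⁻¹' T) (hb : b ∈ f ⁻¹' T), f a = s → f b = t →
      (J.induce (f ⁻¹' T)).Reachable ⟨a, ha⟩ ⟨b, hb⟩ := by
  have hfib : ∀ a b (ha : a ∈ f ⁻¹' T) (hb : b ∈ f ⁻¹' T), f a = f b →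
      (J.induce (f ⁻¹' T)).Reachable ⟨a, ha⟩ ⟨b, hb⟩ := fun a b ha hb hab =>
    (hf (f a) ⟨a, rfl⟩ ⟨b, hab.symm⟩).map (J.induceHomOfLE (s := f ⁻¹' {f a}) (s' := f ⁻¹' T)
      fun x (hx : f x = f a) => show f x ∈ T from hx ▸ ha).toHom
  induction p with
  | nil => exact fun a b ha hb has hbs => hfib a b ha hb (has.trans hbs.symm)
  | @cons s c t hsc p ih =>
    intro a b ha hb has hbt
    obtain ⟨-, a', c', hac, ha', hc'⟩ := hsc
    have ha'T : a' ∈ f ⁻¹' T := by simp [ha', s.2]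
    have hc'T : c' ∈ f ⁻¹' T := by simp [hc', c.2]
    exact (hfib a a' ha ha'T (has.trans ha'.symm)).trans <|
      (Adj.reachable (G := J.induce _) (u := ⟨a', ha'T⟩) (v := ⟨c', hc'T⟩) hac).trans
        (ih c' b hc'T hb hc' hbt)

theorem HasK4Minor.of_map {f : W → W'} (hf : ∀ w, (J.induce (f ⁻¹' {w})).Preconnected) :
    HasK4Minor (J.map f) → HasK4Minor J := by
  rintro ⟨S, -, hconn, hdisj, hadj⟩
  have hne : ∀ i, (f ⁻¹' S i).Nonempty := fun i => by
    obtain ⟨-, ha, -, -, -, a, -, -, rfl, -⟩ := hadj (show i ≠ i + 1 by fin_cases i <;> decide)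
    exact ⟨a, ha⟩
  refine ⟨fun i => f ⁻¹' S i, hne, fun i => ?_, fun i j hij => (hdisj hij).preimage f,
    fun i j hij => ?_⟩
  · have := (hne i).to_subtype
    refine ⟨fun a b => ?_⟩
    obtain ⟨p⟩ := hconn i ⟨f a, a.2⟩ ⟨f b, b.2⟩
    exact reachable_induce_preimage_of_map hf p a b a.2 b.2 rfl rfl
  · obtain ⟨-, ha, -, hb, -, a, b, hab, rfl, rfl⟩ := hadj hij
    exact ⟨a, ha, b, hb, hab⟩

/-- `J.map (contractTo M m)` is `J` with `M` contracted to `m`; the other vertices of `M` become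
isolated. -/
noncomputable def contractTo (M : Set W) (m w : W) : W :=
  open Classical in if w ∈ M then m else w

variable {M : Set W} {m : W}

theorem contractTo_of_mem {w : W} (hw : w ∈ M) : contractTo M m w = m := by simp [contractTo, hw]

theorem contractTo_of_notMem {w : W} (hw : w ∉ M) : contractTo M m w = w := by simp [contractTo, hw]

theorem preconnected_induce_preimage_contractTo (hM : (J.induce M).Connected) (hm : m ∈ M)
    (w : W) : (J.induce (contractTo M m ⁻¹' {w})).Preconnected := by
  by_cases hwm : w = m
  · have : contractTo M m ⁻¹' {w} = M := by
      ext x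
      by_cases hx : x ∈ M
      · simp [contractTo_of_mem hx, hwm, hx]
      · simp only [Set.mem_preimage, contractTo_of_notMem hx, Set.mem_singleton_iff, hx, iff_false]
        rintro rfl; exact hx (hwm ▸ hm)
    rw [this]
    exact hM.preconnected
  · -- the other fibres have at most one point
    have hsub : ∀ x ∈ contractTo M m ⁻¹' {w}, x = w := fun x hx => by
      by_cases hxM : x ∈ M
      · simp only [Set.mem_preimage, contractTo_of_mem hxM, Set.mem_singleton_iff] at hx
        exact absurd hx.symm hwm
      · simpa [contractTo_of_notMem hxM] using hx
    rintro ⟨a, ha⟩ ⟨b, hb⟩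
    obtain rfl : a = b := (hsub a ha).trans (hsub b hb).symm
    rfl

theorem map_contractTo_adj (hm : m ∈ M) {a t : W} (ha : a ∈ M) (ht : t ∉ M) (hat : J.Adj a t) :
    (J.map (contractTo M m)).Adj m t := by
  have := map_adj_apply' (f := contractTo M m) hat
  rw [contractTo_of_mem ha, contractTo_of_notMem ht] at this
  exact this (ne_of_mem_of_not_mem hm ht)

theorem support_map_contractTo_subset :
    (J.map (contractTo M m)).support ⊆ insert m (J.support \ M) := by
  rintro _ ⟨_, -, a, b, hab, rfl, -⟩
  by_cases ha : a ∈ M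
  · exact Or.inl (contractTo_of_mem ha)
  · rw [contractTo_of_notMem ha]
    exact Or.inr ⟨⟨b, hab⟩, ha⟩

theorem support_map_contractTo_ssubset {y : W} (hy : y ∈ M) (hmy : J.Adj m y) :
    (J.map (contractTo M m)).support ⊂ J.support := by
  refine Set.ssubset_iff_subset_ne.mpr ⟨fun w hw => ?_, fun heq => ?_⟩
  · rcases support_map_contractTo_subset hw with rfl | ⟨hwJ, -⟩
    exacts [⟨y, hmy⟩, hwJ]
  · have hyJ : y ∈ (J.map (contractTo M m)).support := heq ▸ ⟨m, hmy.symm⟩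
    rcases support_map_contractTo_subset hyJ with hym | ⟨-, hyM⟩
    exacts [hmy.ne' hym, hyM hy]

theorem encard_neighborSet_le_map_contractTo (hm : m ∈ M) {w : W} (hw : w ∉ M)
    (hsingle : ∀ a ∈ M, ∀ b ∈ M, J.Adj w a → J.Adj w b → a = b) :
    (J.neighborSet w).encard ≤ ((J.map (contractTo M m)).neighborSet w).encard := by
  have hne : ∀ t, J.Adj w t → contractTo M m t ≠ w := fun t ht => by
    by_cases htM : t ∈ M
    · rw [contractTo_of_mem htM]; exact ne_of_mem_of_not_mem hm hw
    · rw [contractTo_of_notMem htM]; exact ht.ne'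
  refine Set.encard_le_encard_of_injOn (f := contractTo M m) (fun t ht => ?_) ?_
  · have := map_adj_apply' (f := contractTo M m) ht
    rw [contractTo_of_notMem hw] at this
    exact this (hne t ht).symm
  · intro a ha b hb hab
    by_cases haM : a ∈ M <;> by_cases hbM : b ∈ M
    · exact hsingle a haM b hbM ha hb
    · rw [contractTo_of_mem haM, contractTo_of_notMem hbM] at hab
      exact absurd (hab ▸ hm) hbM
    · rw [contractTo_of_notMem haM, contractTo_of_mem hbM] at hab
      exact absurd (hab ▸ hm) haM
    · rwa [contractTo_of_notMem haM, contractTo_of_notMem hbM] at hab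

theorem spanningCoe_induce_adj {s : Set W} {a b : W} :
    (J.induce s).spanningCoe.Adj a b ↔ J.Adj a b ∧ a ∈ s ∧ b ∈ s := by
  constructor
  · rintro ⟨-, ⟨a, ha⟩, ⟨b, hb⟩, hab, rfl, rfl⟩
    exact ⟨hab, ha, hb⟩
  · rintro ⟨hab, ha, hb⟩
    exact ⟨hab.ne, ⟨a, ha⟩, ⟨b, hb⟩, hab, rfl, rfl⟩

theorem mem_of_reachable_spanningCoe_induce {s : Set W} {a w : W}
    (h : (J.induce s).spanningCoe.Reachable a w) (ha : a ∈ s) : w ∈ s := by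
  rcases eq_or_ne a w with rfl | hne
  · exact ha
  · obtain ⟨t, hwt⟩ := mem_support_of_reachable hne.symm h.symm
    exact (spanningCoe_induce_adj.mp hwt).2.1

theorem HasK4Minor.of_branchSets {A B C D : Set W} (hA : (J.induce A).Connected)
    (hB : (J.induce B).Connected) (hC : (J.induce C).Connected) (hD : (J.induce D).Connected)
    (hAB : Disjoint A B) (hAC : Disjoint A C) (hAD : Disjoint A D) (hBC : Disjoint B C)
    (hBD : Disjoint B D) (hCD : Disjoint C D)
    (eAB : ∃ a ∈ A, ∃ b ∈ B, J.Adj a b) (eAC : ∃ a ∈ A, ∃ b ∈ C, J.Adj a b)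
    (eAD : ∃ a ∈ A, ∃ b ∈ D, J.Adj a b) (eBC : ∃ a ∈ B, ∃ b ∈ C, J.Adj a b)
    (eBD : ∃ a ∈ B, ∃ b ∈ D, J.Adj a b) (eCD : ∃ a ∈ C, ∃ b ∈ D, J.Adj a b) :
    HasK4Minor J := by
  have symm : ∀ {X Y : Set W}, (∃ a ∈ X, ∃ b ∈ Y, J.Adj a b) → ∃ a ∈ Y, ∃ b ∈ X, J.Adj a b :=
    fun ⟨a, ha, b, hb, hab⟩ => ⟨b, hb, a, ha, hab.symm⟩
  refine ⟨![A, B, C, D], fun i => ?_, fun i => ?_, fun i j hij => ?_, fun i j hij => ?_⟩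
  · fin_cases i
    exacts [Set.nonempty_coe_sort.mp hA.nonempty, Set.nonempty_coe_sort.mp hB.nonempty,
      Set.nonempty_coe_sort.mp hC.nonempty, Set.nonempty_coe_sort.mp hD.nonempty]
  · fin_cases i
    exacts [hA, hB, hC, hD]
  · fin_cases i <;> fin_cases j <;> first | exact absurd rfl hij |
      (simp only [Fin.zero_eta, Fin.mk_one, Fin.reduceFinMk, Matrix.cons_val]
       first | assumption | exact Disjoint.symm ‹_›)
  · fin_cases i <;> fin_cases j <;> first | exact absurd rfl hij |
      (simp only [Fin.zero_eta, Fin.mk_one, Fin.reduceFinMk, Matrix.cons_val]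
       first | assumption | exact symm ‹_›)

theorem hasK4Minor_of_common_adj_reachable {x₁ x₂ a c : W} (hx : J.Adj x₁ x₂) (ha₁ : J.Adj x₁ a)
    (ha₂ : J.Adj x₂ a) (hc₁ : J.Adj x₁ c) (hc₂ : J.Adj x₂ c) (hac : a ≠ c)
    (hr : (J.induce {x₁, x₂}ᶜ).spanningCoe.Reachable a c) : HasK4Minor J := by
  classical
  set D := (J.induce {x₁, x₂}ᶜ).spanningCoe
  obtain ⟨p⟩ := hr
  have hp := p.bypass_isPath
  generalize p.bypass = p' at hp
  cases p' with
  | nil => exact absurd rfl hac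
  | @cons a w c haw q =>
    rw [Walk.cons_isPath_iff] at hp
    -- the branch sets `{x₁}`, `{x₂}`, `{a}` and the rest of an `a`–`c` path avoiding `x₁, x₂`
    have hq : ∀ t ∈ q.support, t ∉ ({x₁, x₂} : Set W) := fun t ht =>
      mem_of_reachable_spanningCoe_induce ⟨q.takeUntil t ht⟩ (spanningCoe_induce_adj.mp haw).2.2
    have hsingle : ∀ y : W, (J.induce {y}).Connected := fun y => by
      rw [induce_singleton_eq_top]; exact connected_top
    have hDJ : D ≤ J := spanningCoe_induce_le _ _
    have hqconn : (J.induce {t | t ∈ q.support}).Connected :=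
      Walk.support_mapLe_eq_support hDJ q ▸ (q.mapLe hDJ).connected_induce_support
    refine HasK4Minor.of_branchSets (hsingle x₁) (hsingle x₂) (hsingle a) hqconn
      (by simpa using hx.ne) (by simpa using ha₁.ne) ?_ (by simpa using ha₂.ne) ?_ ?_
      ⟨x₁, rfl, x₂, rfl, hx⟩ ⟨x₁, rfl, a, rfl, ha₁⟩ ⟨x₁, rfl, c, q.end_mem_support, hc₁⟩
      ⟨x₂, rfl, a, rfl, ha₂⟩ ⟨x₂, rfl, c, q.end_mem_support, hc₂⟩
      ⟨a, rfl, w, q.start_mem_support, hDJ haw⟩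
    · exact Set.disjoint_singleton_left.mpr fun h => hq x₁ h (by simp)
    · exact Set.disjoint_singleton_left.mpr fun h => hq x₂ h (by simp)
    · exact Set.disjoint_singleton_left.mpr hp.2

end Minors

section Dirac

variable {W : Type*} {J : SimpleGraph W} {M : Set W} {m u v : W}

structure MinDegThreeOff (J : SimpleGraph W) (u v : W) : Prop where
  root : u = v ∨ J.Adj u v
  three_le_encard : ∀ w ∈ J.support, w ≠ u → w ≠ v → 3 ≤ (J.neighborSet w).encard
  exists_inner : ∃ w ∈ J.support, w ≠ u ∧ w ≠ v

theorem MinDegThreeOff.map_contractTo (h : MinDegThreeOff J u v) (hm : m ∈ M)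
    (hsingle : ∀ w ∉ M, ∀ a ∈ M, ∀ b ∈ M, J.Adj w a → J.Adj w b → a = b)
    (hnbrs : ∃ c d, c ≠ d ∧ (J.map (contractTo M m)).Adj m c ∧ (J.map (contractTo M m)).Adj m d)
    (hdeg : contractTo M m u ≠ m → contractTo M m v ≠ m →
      3 ≤ ((J.map (contractTo M m)).neighborSet m).encard) :
    MinDegThreeOff (J.map (contractTo M m)) (contractTo M m u) (contractTo M m v) := by
  set f := contractTo M m
  have hfix : ∀ w ∉ M, ∀ x, f x ≠ w → x ≠ w := fun w hw x hx hxw =>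
    hx (by rw [hxw]; exact contractTo_of_notMem hw)
  refine ⟨?_, fun w hw hwu hwv => ?_, ?_⟩
  · rcases h.root with rfl | huv
    · exact .inl rfl
    · by_cases huv' : f u = f v
      · exact .inl huv'
      · exact .inr (map_adj_apply' huv huv')
  · rcases support_map_contractTo_subset hw with rfl | ⟨hwJ, hwM⟩
    · exact hdeg (Ne.symm hwu) (Ne.symm hwv)
    · exact (h.three_le_encard w hwJ (hfix w hwM u (Ne.symm hwu)).symm
        (hfix w hwM v (Ne.symm hwv)).symm).trans
        (encard_neighborSet_le_map_contractTo hm hwM (hsingle w hwM))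
  · by_cases hroot : f u = m ∨ f v = m
    · obtain ⟨c, d, hcd, hc, hd⟩ := hnbrs
      have := hc.ne'
      have := hd.ne'
      by_cases hc' : c ≠ f u ∧ c ≠ f v
      · exact ⟨c, ⟨m, hc.symm⟩, hc'⟩
      · exact ⟨d, ⟨m, hd.symm⟩, by grind⟩
    · rw [not_or] at hroot
      obtain ⟨c, hc, -⟩ := Set.exists_mem_ne_ne_of_three_le_encard (hdeg hroot.1 hroot.2) m m
      exact ⟨m, ⟨c, hc⟩, Ne.symm hroot.1, Ne.symm hroot.2⟩

theorem MinDegThreeOff.hasK4Minor_of_contractTo (h : MinDegThreeOff J u v)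
    (ih : ∀ (J' : SimpleGraph W) (u' v' : W), J'.support ⊂ J.support →
      MinDegThreeOff J' u' v' → HasK4Minor J')
    (hM : (J.induce M).Connected) (hm : m ∈ M) {y : W} (hy : y ∈ M) (hmy : J.Adj m y)
    (hsingle : ∀ w ∉ M, ∀ a ∈ M, ∀ b ∈ M, J.Adj w a → J.Adj w b → a = b)
    (hnbrs : ∃ c d, c ≠ d ∧ (J.map (contractTo M m)).Adj m c ∧ (J.map (contractTo M m)).Adj m d)
    (hdeg : contractTo M m u ≠ m → contractTo M m v ≠ m →
      3 ≤ ((J.map (contractTo M m)).neighborSet m).encard) :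
    HasK4Minor J :=
  (ih _ _ _ (support_map_contractTo_ssubset hy hmy)
    (h.map_contractTo hm hsingle hnbrs hdeg)).of_map (preconnected_induce_preimage_contractTo hM hm)

/-- An edge `xy` in no triangle, with `x` off the root, can be contracted. -/
theorem MinDegThreeOff.hasK4Minor_of_forall_not_adj (h : MinDegThreeOff J u v)
    (ih : ∀ (J' : SimpleGraph W) (u' v' : W), J'.support ⊂ J.support →
      MinDegThreeOff J' u' v' → HasK4Minor J')
    {x y : W} (hxy : J.Adj x y) (hxu : x ≠ u) (hxv : x ≠ v) (hno : ∀ t, J.Adj x t → ¬J.Adj y t) :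
    HasK4Minor J := by
  have hout : ∀ t, J.Adj x t → t ≠ y → t ∉ ({x, y} : Set W) := by
    rintro t hxt hty (rfl | rfl)
    exacts [hxt.ne rfl, hty rfl]
  have hx3 := h.three_le_encard x ⟨y, hxy⟩ hxu hxv
  obtain ⟨c₁, hc₁, hc₁y, -⟩ := Set.exists_mem_ne_ne_of_three_le_encard hx3 y y
  obtain ⟨c₂, hc₂, hc₂y, hc₂₁⟩ := Set.exists_mem_ne_ne_of_three_le_encard hx3 y c₁
  have hadj : ∀ t, J.Adj x t → t ≠ y → (J.map (contractTo {x, y} x)).Adj x t := fun t hxt hty =>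
    map_contractTo_adj (by simp) (by simp) (hout t hxt hty) hxt
  refine h.hasK4Minor_of_contractTo ih (induce_pair_connected_of_adj hxy) (by simp) (y := y)
    (by simp) hxy ?_ ⟨c₂, c₁, hc₂₁, hadj c₂ hc₂ hc₂y, hadj c₁ hc₁ hc₁y⟩ fun hu hv => ?_
  · rintro w hw a (rfl | rfl) b (rfl | rfl) ha hb
    exacts [rfl, absurd hb.symm (hno w ha.symm), absurd ha.symm (hno w hb.symm), rfl]
  · -- both ends of `xy` lie off the root, so `y` brings a third neighbour
    have hyu : y ≠ u := fun hyu => hu (contractTo_of_mem (by simp [hyu]))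
    have hyv : y ≠ v := fun hyv => hv (contractTo_of_mem (by simp [hyv]))
    obtain ⟨c₃, hc₃, hc₃x, -⟩ :=
      Set.exists_mem_ne_ne_of_three_le_encard (h.three_le_encard y ⟨x, hxy.symm⟩ hyu hyv) x x
    have hc₃M : c₃ ∉ ({x, y} : Set W) := by
      rintro (rfl | rfl)
      exacts [hc₃x rfl, hc₃.ne rfl]
    exact Set.three_le_encard_of_mem (hadj c₂ hc₂ hc₂y) (hadj c₁ hc₁ hc₁y)
      (map_contractTo_adj (by simp) (by simp) hc₃M hc₃) hc₂₁
      (fun h' => hno c₂ hc₂ (h' ▸ hc₃)) (fun h' => hno c₁ hc₁ (h' ▸ hc₃))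

/-- The side of the separator `{x₁, x₂}` containing `a`, if it avoids the root, is a smaller
instance rooted at the edge `x₁x₂`. -/
theorem MinDegThreeOff.hasK4Minor_of_side (h : MinDegThreeOff J u v)
    (ih : ∀ (J' : SimpleGraph W) (u' v' : W), J'.support ⊂ J.support →
      MinDegThreeOff J' u' v' → HasK4Minor J')
    {x₁ x₂ a c : W} (hx : J.Adj x₁ x₂) (ha : J.Adj x₁ a) (ha₂ : a ≠ x₂) (hc : c ∈ J.support)
    (hcX : c ∉ ({x₁, x₂} : Set W)) (hnr : ¬(J.induce {x₁, x₂}ᶜ).spanningCoe.Reachable a c)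
    (hu : ¬(J.induce {x₁, x₂}ᶜ).spanningCoe.Reachable a u)
    (hv : ¬(J.induce {x₁, x₂}ᶜ).spanningCoe.Reachable a v) : HasK4Minor J := by
  set X : Set W := {x₁, x₂}
  set S := {w | (J.induce Xᶜ).spanningCoe.Reachable a w}
  set J' := (J.induce (S ∪ X)).spanningCoe
  have haX : a ∈ Xᶜ := by
    rintro (rfl | rfl)
    exacts [ha.ne rfl, ha₂ rfl]
  have hSX : ∀ w ∈ S, w ∈ Xᶜ := fun w hw => mem_of_reachable_spanningCoe_induce hw haX
  have hN : ∀ w ∈ S, J'.neighborSet w = J.neighborSet w :=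
    fun w hw => by
      ext t
      simp only [J', mem_neighborSet, spanningCoe_induce_adj]
      refine ⟨fun h => h.1, fun hwt => ⟨hwt, .inl hw, ?_⟩⟩
      by_cases htX : t ∈ X
      · exact .inr htX
      · exact .inl (Reachable.trans hw (spanningCoe_induce_adj.mpr ⟨hwt, hSX w hw, htX⟩).reachable)
  refine (ih J' x₁ x₂ (Set.ssubset_iff_subset_ne.mpr ⟨support_mono (spanningCoe_induce_le _ _),
    fun heq => ?_⟩) ⟨.inr ?_, fun w hw hw₁ hw₂ => ?_, ⟨a, ?_, ha.ne', ha₂⟩⟩).mono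
    (spanningCoe_induce_le _ _)
  · obtain ⟨t, hct⟩ := heq ▸ hc
    rcases (spanningCoe_induce_adj.mp hct).2.1 with hcS | hcX'
    exacts [hnr hcS, hcX hcX']
  · exact spanningCoe_induce_adj.mpr ⟨hx, .inr (by simp [X]), .inr (by simp [X])⟩
  · obtain ⟨t, hwt⟩ := hw
    have hwS : w ∈ S := (spanningCoe_induce_adj.mp hwt).2.1.resolve_right (by simp [X, hw₁, hw₂])
    rw [hN w hwS]
    exact h.three_le_encard w ⟨t, (spanningCoe_induce_adj.mp hwt).1⟩
      (by rintro rfl; exact hu hwS) (by rintro rfl; exact hv hwS)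
  · exact ⟨x₁, spanningCoe_induce_adj.mpr ⟨ha.symm, .inl (Reachable.refl _), .inr (by simp [X])⟩⟩

/-- Two common neighbours `a ≠ c` of an edge `x₁x₂`: either they are joined off `x₁, x₂`,
giving a `K₄` minor, or `{x₁, x₂}` separates them. -/
theorem MinDegThreeOff.hasK4Minor_of_fan (h : MinDegThreeOff J u v)
    (ih : ∀ (J' : SimpleGraph W) (u' v' : W), J'.support ⊂ J.support →
      MinDegThreeOff J' u' v' → HasK4Minor J')
    {x₁ x₂ a c : W} (hx : J.Adj x₁ x₂) (ha₁ : J.Adj x₁ a) (ha₂ : J.Adj x₂ a) (hc₁ : J.Adj x₁ c)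
    (hc₂ : J.Adj x₂ c) (hac : a ≠ c) : HasK4Minor J := by
  set D := (J.induce {x₁, x₂}ᶜ).spanningCoe
  by_cases hr : D.Reachable a c
  · exact hasK4Minor_of_common_adj_reachable hx ha₁ ha₂ hc₁ hc₂ hac hr
  have hX : ∀ {y}, J.Adj x₁ y → J.Adj x₂ y → y ∉ ({x₁, x₂} : Set W) := fun h₁ h₂ => by
    rintro (rfl | rfl)
    exacts [h₁.ne rfl, h₂.ne rfl]
  -- the root lies on at most one side
  have hroot : ∀ r ∈ ({u, v} : Set W), ∀ r' ∈ ({u, v} : Set W), D.Reachable a r →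
      ¬D.Reachable c r' := by
    have heq : ∀ r ∈ ({u, v} : Set W), ∀ r' ∈ ({u, v} : Set W), r = r' ∨ J.Adj r r' := by
      rintro r (rfl | rfl) r' (rfl | rfl)
      exacts [.inl rfl, h.root, h.root.imp Eq.symm Adj.symm, .inl rfl]
    intro r hr' r' hr'' har hcr
    have hr₁ := mem_of_reachable_spanningCoe_induce har (hX ha₁ ha₂)
    have hr₂ := mem_of_reachable_spanningCoe_induce hcr (hX hc₁ hc₂)
    refine hr (har.trans ?_ |>.trans hcr.symm)
    rcases heq r hr' r' hr'' with rfl | hrr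
    exacts [Reachable.refl _, (spanningCoe_induce_adj.mpr ⟨hrr, hr₁, hr₂⟩).reachable]
  by_cases hside : D.Reachable a u ∨ D.Reachable a v
  · obtain ⟨r, hr', har⟩ : ∃ r ∈ ({u, v} : Set W), D.Reachable a r := by
      rcases hside with h' | h'
      exacts [⟨u, by simp, h'⟩, ⟨v, by simp, h'⟩]
    exact h.hasK4Minor_of_side ih hx hc₁ hc₂.ne' ⟨x₁, ha₁.symm⟩ (hX ha₁ ha₂)
      (fun h' => hr h'.symm) (hroot r hr' u (by simp) har) (hroot r hr' v (by simp) har)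
  · rw [not_or] at hside
    exact h.hasK4Minor_of_side ih hx ha₁ ha₂.ne' ⟨x₁, hc₁.symm⟩ (hX hc₁ hc₂) hr hside.1 hside.2

/-- A triangle `wab` whose edges lie in no other triangle, with `w` off the root, can be
contracted. -/
theorem MinDegThreeOff.hasK4Minor_of_triangle (h : MinDegThreeOff J u v)
    (ih : ∀ (J' : SimpleGraph W) (u' v' : W), J'.support ⊂ J.support →
      MinDegThreeOff J' u' v' → HasK4Minor J')
    {w a b : W} (hwu : w ≠ u) (hwv : w ≠ v) (hwa : J.Adj w a) (hwb : J.Adj w b) (hab : J.Adj a b)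
    (hpartner : ∀ x y z, J.Adj w x → J.Adj w y → J.Adj w z → J.Adj x y → J.Adj x z → y = z)
    (hcommon : ∀ x, J.Adj w x → ∃ y, J.Adj w y ∧ J.Adj x y)
    (hno : ∀ t, t ≠ w → J.Adj a t → ¬J.Adj b t) : HasK4Minor J := by
  set M : Set W := {w, a, b}
  have hwM : w ∈ M := by simp [M]
  have hout : ∀ x, J.Adj w x → x ≠ a → x ≠ b → x ∉ M := by
    rintro x hwx hxa hxb (rfl | rfl | rfl)
    exacts [hwx.ne rfl, hxa rfl, hxb rfl]
  have hM : (J.induce M).Connected := by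
    have := induce_union_connected (induce_pair_connected_of_adj hwa).preconnected
      (induce_pair_connected_of_adj hwb).preconnected ⟨w, by simp⟩
    rwa [show ({w, a} ∪ {w, b} : Set W) = M by ext; simp [M]; tauto] at this
  obtain ⟨c, hwc, hca, hcb⟩ := Set.exists_mem_ne_ne_of_three_le_encard
    (h.three_le_encard w ⟨a, hwa⟩ hwu hwv) a b
  obtain ⟨d, hwd, hcd⟩ := hcommon c hwc
  have hda : d ≠ a := fun hda => hcb (hpartner a b c hwa hwb hwc hab (hda ▸ hcd).symm).symm
  have hdb : d ≠ b := fun hdb =>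
    hca (hpartner b a c hwb hwa hwc hab.symm (hdb ▸ hcd).symm).symm
  refine h.hasK4Minor_of_contractTo ih hM hwM (y := a) (by simp [M]) hwa ?_
    ⟨c, d, hcd.ne, map_contractTo_adj hwM hwM (hout c hwc hca hcb) hwc,
      map_contractTo_adj hwM hwM (hout d hwd hda hdb) hwd⟩ fun hu hv => ?_
  · intro x hx p hp q hq hxp hxq
    simp only [M, Set.mem_insert_iff, Set.mem_singleton_iff, not_or] at hx hp hq
    obtain ⟨hxw, hxa, hxb⟩ := hx
    rcases hp with rfl | rfl | rfl <;> rcases hq with rfl | rfl | rfl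
    all_goals first
      | rfl
      | exact absurd (hpartner _ _ x hwa hwb hxp.symm hab hxq.symm) (Ne.symm hxb)
      | exact absurd (hpartner _ _ x hwa hwb hxq.symm hab hxp.symm) (Ne.symm hxb)
      | exact absurd (hpartner _ _ x hwb hwa hxp.symm hab.symm hxq.symm) (Ne.symm hxa)
      | exact absurd (hpartner _ _ x hwb hwa hxq.symm hab.symm hxp.symm) (Ne.symm hxa)
      | exact absurd hxq.symm (hno x hxw hxp.symm)
      | exact absurd hxp.symm (hno x hxw hxq.symm)
  · -- `a` lies off the root, so it brings a third neighbour
    have hau : a ≠ u := fun hau => hu (contractTo_of_mem (by simp [M, hau]))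
    have hav : a ≠ v := fun hav => hv (contractTo_of_mem (by simp [M, hav]))
    obtain ⟨e, hae, hew, heb⟩ := Set.exists_mem_ne_ne_of_three_le_encard
      (h.three_le_encard a ⟨b, hab⟩ hau hav) w b
    have heM : e ∉ M := by
      rintro (rfl | rfl | rfl)
      exacts [hew rfl, hae.ne rfl, heb rfl]
    refine Set.three_le_encard_of_mem (map_contractTo_adj hwM hwM (hout c hwc hca hcb) hwc)
      (map_contractTo_adj hwM hwM (hout d hwd hda hdb) hwd)
      (map_contractTo_adj hwM (by simp [M]) heM hae) hcd.ne ?_ ?_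
    · rintro rfl; exact hcb (hpartner a b c hwa hwb hwc hab hae).symm
    · rintro rfl; exact hdb (hpartner a b d hwa hwb hwd hab hae).symm

/-- **Dirac's lemma**, rooted version. -/
theorem MinDegThreeOff.hasK4Minor [Finite W] (h : MinDegThreeOff J u v) : HasK4Minor J := by
  induction hn : J.support.ncard using Nat.strong_induction_on generalizing J u v with
  | _ n ihn =>
  have ih : ∀ (J' : SimpleGraph W) (u' v' : W), J'.support ⊂ J.support →
      MinDegThreeOff J' u' v' → HasK4Minor J' := fun J' u' v' hss h' =>
    ihn _ (hn ▸ Set.ncard_lt_ncard hss) h' rfl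
  by_cases hA : ∃ x y, J.Adj x y ∧ x ≠ u ∧ x ≠ v ∧ ∀ t, J.Adj x t → ¬J.Adj y t
  · obtain ⟨x, y, hxy, hxu, hxv, hno⟩ := hA
    exact h.hasK4Minor_of_forall_not_adj ih hxy hxu hxv hno
  push Not at hA
  obtain ⟨w, ⟨a, hwa⟩, hwu, hwv⟩ := h.exists_inner
  have hcommon : ∀ x, J.Adj w x → ∃ y, J.Adj w y ∧ J.Adj x y := fun x hx => hA w x hx hwu hwv
  by_cases hB : ∃ b a c, J.Adj w b ∧ J.Adj w a ∧ J.Adj w c ∧ J.Adj b a ∧ J.Adj b c ∧ a ≠ c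
  · obtain ⟨b, a, c, hwb, hwa, hwc, hba, hbc, hac⟩ := hB
    exact h.hasK4Minor_of_fan ih hwb hwa hba hwc hbc hac
  push Not at hB
  obtain ⟨b, hwb, hab⟩ := hcommon a hwa
  by_cases hC : ∃ t, t ≠ w ∧ J.Adj a t ∧ J.Adj b t
  · obtain ⟨t, htw, hat, hbt⟩ := hC
    exact h.hasK4Minor_of_fan ih hab hwa.symm hwb.symm hat hbt (Ne.symm htw)
  push Not at hC
  exact h.hasK4Minor_of_triangle ih hwu hwv hwa hwb hab hB hcommon hC

theorem exists_mem_support_encard_neighborSet_lt_three [Finite W] (hJ : ¬HasK4Minor J)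
    {x y : W} (hxy : J.Adj x y) : ∃ z ∈ J.support, (J.neighborSet z).encard < 3 := by
  by_contra! hdeg
  exact hJ (MinDegThreeOff.hasK4Minor (u := x) (v := x)
    ⟨.inl rfl, fun w hw _ _ => hdeg w hw, y, ⟨x, hxy.symm⟩, hxy.ne', hxy.ne'⟩)

end Dirac

namespace SimpleGraph.Walk

variable {W : Type*} {G : SimpleGraph W}

theorem exists_isPath_or_odd_isCycle {a b : W} (p : G.Walk a b) :
    (∃ q : G.Walk a b, q.IsPath ∧ q.length ≤ p.length ∧ q.length % 2 = p.length % 2) ∨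
      ∃ (x : W) (c : G.Walk x x), c.IsCycle ∧ Odd c.length ∧ c.length ≤ p.length := by
  classical
  induction p with
  | nil => exact .inl ⟨nil, .nil, le_rfl, rfl⟩
  | @cons a w b h p ih =>
    rcases ih with ⟨q, hq, hle, hpar⟩ | ⟨x, c, hc, hodd, hlen⟩
    · by_cases ha : a ∈ q.support
      · have hsplit := congrArg length (q.take_spec ha)
        rw [length_append] at hsplit
        set q₁ := q.takeUntil a ha
        rcases Nat.even_or_odd q₁.length with ⟨n, hn⟩ | hod
        · -- `cons h q₁` closes up into a cycle: `q₁` is a path of positive length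
          have hpos : q₁.length ≠ 0 := fun h0 => h.ne (eq_of_length_eq_zero h0).symm
          refine .inr ⟨a, cons h q₁, ?_, ⟨n, by simp; omega⟩, by simp; omega⟩
          refine isCycle_iff_isPath_tail_and_le_length.mpr ⟨by simpa using hq.takeUntil ha, ?_⟩
          simp only [length_cons]
          omega
        · rw [Nat.odd_iff] at hod
          exact .inl ⟨q.dropUntil a ha, hq.dropUntil ha, by simp; omega, by simp; omega⟩
      · exact .inl ⟨cons h q, hq.cons ha, by simpa using hle, by simp; omega⟩
    · exact .inr ⟨x, c, hc, hodd, by simp; omega⟩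

end SimpleGraph.Walk

theorem oddGirthAtLeast.le_length {W : Type*} {G : SimpleGraph W} {n : ℕ}
    (hG : oddGirthAtLeast G n) {u : W} (p : G.Walk u u) (hp : Odd p.length) : n ≤ p.length := by
  rcases p.exists_isPath_or_odd_isCycle with ⟨q, hq, -, hpar⟩ | ⟨x, c, hc, hodd, hle⟩
  · rw [(Walk.isPath_iff_nil.mp hq).eq_nil, Walk.length_nil] at hpar
    rw [Nat.odd_iff] at hp
    omega
  · exact (hG x c hc hodd).trans hle

section CappedDist

variable {W : Type*} (G : SimpleGraph W) (k : ℕ)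

/-- The distance in `G` capped at `k`; unreachable pairs are at capped distance `k`. -/
noncomputable def cappedDist (a b : W) : ℕ := (min (G.edist a b) k).toNat

variable {G k}

theorem coe_cappedDist (a b : W) : (cappedDist G k a b : ℕ∞) = min (G.edist a b) k :=
  ENat.natCast_toNat ((min_le_right _ _).trans_lt (ENat.natCast_lt_top k)).ne

theorem cappedDist_comm (a b : W) : cappedDist G k a b = cappedDist G k b a := by
  rw [cappedDist, edist_comm, cappedDist]

theorem cappedDist_le (a b : W) : cappedDist G k a b ≤ k := by
  exact_mod_cast (coe_cappedDist a b).trans_le (min_le_right _ _)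

theorem one_le_cappedDist (hk : 1 ≤ k) {a b : W} (hab : a ≠ b) : 1 ≤ cappedDist G k a b := by
  have : (1 : ℕ∞) ≤ min (G.edist a b) k :=
    le_min (Order.one_le_iff_ne_zero.mpr (edist_eq_zero_iff.not.mpr hab)) (by exact_mod_cast hk)
  exact_mod_cast (coe_cappedDist (G := G) (k := k) a b).symm ▸ this

theorem cappedDist_triangle (a b c : W) :
    cappedDist G k a c ≤ cappedDist G k a b + cappedDist G k b c := by
  suffices min (G.edist a c) k ≤ min (G.edist a b) k + min (G.edist b c) k by
    rw [← coe_cappedDist, ← coe_cappedDist, ← coe_cappedDist] at this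
    exact_mod_cast this
  refine (min_le_min_right _ (G.edist_triangle (v := b))).trans ?_
  rcases min_cases (G.edist a b) (k : ℕ∞) with ⟨h1, -⟩ | ⟨h1, -⟩ <;>
    rcases min_cases (G.edist b c) (k : ℕ∞) with ⟨h2, -⟩ | ⟨h2, -⟩ <;> rw [h1, h2]
  · exact min_le_left _ _
  all_goals exact (min_le_right _ _).trans (by simp)

theorem exists_walk_of_cappedDist_lt {a b : W} (h : cappedDist G k a b < k) :
    ∃ p : G.Walk a b, p.length = cappedDist G k a b := by
  have hlt : min (G.edist a b) k < k := by
    rw [← coe_cappedDist]; exact_mod_cast h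
  have he : G.edist a b = cappedDist G k a b := by
    rw [coe_cappedDist, min_eq_left (min_lt_iff.mp hlt |>.resolve_right (lt_irrefl _)).le]
  obtain ⟨p, hp⟩ :=
    (reachable_of_edist_ne_top (he ▸ ENat.natCast_ne_top _)).exists_walk_length_eq_edist
  exact ⟨p, by exact_mod_cast hp.trans he⟩

theorem cappedDist_of_adj (hk : 1 ≤ k) {a b : W} (h : G.Adj a b) : cappedDist G k a b = 1 := by
  rw [cappedDist, edist_eq_one_iff_adj.mpr h, min_eq_left (by exact_mod_cast hk)]
  rfl

end CappedDist

theorem kGoodTriple_cappedDist {W : Type*} {G : SimpleGraph W} {k : ℕ} (hk : 1 ≤ k)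
    (hG : oddGirthAtLeast G (2 * k + 1)) {x y z : W} (hxy : x ≠ y) (hxz : x ≠ z) (hzy : z ≠ y) :
    kGoodTriple k (cappedDist G k x y) (cappedDist G k x z) (cappedDist G k z y) := by
  have t₁ := cappedDist_triangle (G := G) (k := k) x z y
  have t₂ := cappedDist_triangle (G := G) (k := k) x y z
  have t₃ := cappedDist_triangle (G := G) (k := k) z x y
  rw [cappedDist_comm y z] at t₂
  rw [cappedDist_comm z x] at t₃
  have hle := cappedDist_le (G := G) (k := k)
  refine ⟨one_le_cappedDist hk hxy, hle x y, one_le_cappedDist hk hxz, hle x z,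
    one_le_cappedDist hk hzy, hle z y, fun hodd => ?_, fun _ => ⟨t₁, t₂, by omega⟩⟩
  by_cases hsmall : cappedDist G k x y < k ∧ cappedDist G k x z < k ∧ cappedDist G k z y < k
  · -- three shortest walks close up into an odd closed walk
    obtain ⟨p, hp⟩ := exists_walk_of_cappedDist_lt hsmall.1
    obtain ⟨q, hq⟩ := exists_walk_of_cappedDist_lt hsmall.2.1
    obtain ⟨r, hr⟩ := exists_walk_of_cappedDist_lt hsmall.2.2
    have hlen : (q.append (r.append p.reverse)).length =
        cappedDist G k x y + cappedDist G k x z + cappedDist G k z y := by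
      simp only [Walk.length_append, Walk.length_reverse, hp, hq, hr]
      ring
    exact hlen ▸ hG.le_length _ (hlen ▸ hodd)
  · -- a capped side forces the sum up to `2k`
    rw [Nat.odd_iff] at hodd
    have := hle x y; have := hle x z; have := hle z y
    omega

section Realization

variable {V W : Type*} (B Bt : SimpleGraph V) (G : SimpleGraph W) (k : ℕ)

structure Realizes (H : SimpleGraph W) (φ : W → V) : Prop where
  mem_support : ∀ a, φ a ∈ Bt.support
  adj : ∀ a b, H.Adj a b → Bt.Adj (φ a) (φ b) ∧ B.dist (φ a) (φ b) = cappedDist G k a b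

variable {B Bt G k} {H H' : SimpleGraph W} {φ : W → V}

theorem Realizes.anti (hH : H' ≤ H) (hφ : Realizes B Bt G k H φ) : Realizes B Bt G k H' φ :=
  ⟨hφ.mem_support, fun a b hab => hφ.adj a b (hH hab)⟩

theorem Realizes.update [DecidableEq W] {z : W} {z₁ : V}
    (hφ : Realizes B Bt G k (H.deleteIncidenceSet z) φ)
    (hz : ∀ t, H.Adj z t → Bt.Adj (φ t) z₁ ∧ B.dist (φ t) z₁ = cappedDist G k t z)
    (hz₁ : z₁ ∈ Bt.support) : Realizes B Bt G k H (Function.update φ z z₁) := by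
  refine ⟨fun a => ?_, fun a b hab => ?_⟩
  · rcases eq_or_ne a z with rfl | ha
    · simpa using hz₁
    · simpa [ha] using hφ.mem_support a
  rcases eq_or_ne a z with rfl | ha
  · obtain ⟨hB, hd⟩ := hz b hab
    rw [Function.update_self, Function.update_of_ne hab.ne', B.dist_comm, cappedDist_comm]
    exact ⟨hB.symm, hd⟩
  rcases eq_or_ne b z with rfl | hb
  · rw [Function.update_self, Function.update_of_ne ha]
    exact hz a hab.symm
  rw [Function.update_of_ne ha, Function.update_of_ne hb]
  exact hφ.adj a b (deleteIncidenceSet_adj.mpr ⟨hab, ha, hb⟩)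

theorem exists_kGoodTriple {p q : ℕ} (hp : 1 ≤ p) (hpk : p ≤ k) (hq : 1 ≤ q)
    (hqk : q ≤ k) : ∃ r, kGoodTriple k p q r := by
  by_cases hpq : p = q
  · -- `r = 2`, or `r = 1` when `k = 1`
    refine ⟨min 2 k, ?_⟩
    refine ⟨hp, hpk, hq, hqk, by omega, min_le_right _ _, fun h => ?_, fun h => ?_⟩ <;>
      simp only [Nat.odd_iff, Nat.even_iff] at h <;> omega
  · refine ⟨max p q - min p q, ?_⟩
    refine ⟨hp, hpk, hq, hqk, by omega, by omega, fun h => ?_, fun _ => by omega⟩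
    rw [Nat.odd_iff] at h
    omega

theorem Realizes.exists_update_of_unique_adj [DecidableEq W] (hk : 1 ≤ k) (hBc : B.Connected)
    (hPD : IsPartialDistGraph B Bt k) (hAll : AllKGoodTripleProp B Bt k)
    {z x : W} (hφ : Realizes B Bt G k (H.deleteIncidenceSet z) φ) (hzx : z ≠ x)
    (hx : ∀ t, H.Adj z t → t = x) : ∃ z₁, Realizes B Bt G k H (Function.update φ z z₁) := by
  obtain ⟨t₀, ht₀⟩ := hφ.mem_support x
  obtain ⟨r, hr⟩ := exists_kGoodTriple (hBc.pos_dist_of_ne ht₀.ne) (hPD _ _ ht₀)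
    (one_le_cappedDist hk (Ne.symm hzx)) (cappedDist_le x z)
  obtain ⟨z₁, -, hxz₁, -, -, -, hdz₁, -⟩ := hAll.2 (φ x) t₀ ht₀ _ r hr
  refine ⟨z₁, hφ.update (fun t ht => ?_) ⟨φ x, hxz₁.symm⟩⟩
  obtain rfl := hx t ht
  exact ⟨hxz₁, hdz₁⟩

theorem Realizes.exists_update_of_adj_adj [DecidableEq W] (hk : 1 ≤ k)
    (hG : oddGirthAtLeast G (2 * k + 1)) (hAll : AllKGoodTripleProp B Bt k) {z x y : W}
    (hφ : Realizes B Bt G k (H.deleteIncidenceSet z ⊔ edge x y) φ) (hzx : H.Adj z x)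
    (hzy : H.Adj z y) (hxy : x ≠ y) (hN : ∀ t, H.Adj z t → t = x ∨ t = y) :
    ∃ z₁, Realizes B Bt G k H (Function.update φ z z₁) := by
  obtain ⟨hBxy, hdxy⟩ := hφ.adj x y (Or.inr (by simp [edge_adj, hxy]))
  obtain ⟨z₁, -, hxz₁, hyz₁, -, -, hdx, hdy, -⟩ := hAll.2 (φ x) (φ y) hBxy _ _
    (hdxy ▸ kGoodTriple_cappedDist hk hG hxy hzx.ne' hzy.ne)
  refine ⟨z₁, (hφ.anti le_sup_left).update (fun t ht => ?_) ⟨φ x, hxz₁.symm⟩⟩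
  rcases hN t ht with rfl | rfl
  exacts [⟨hxz₁, hdx⟩, ⟨hyz₁, hdy.trans (cappedDist_comm _ _)⟩]

end Realization

section Extension

variable {V W : Type*} {B Bt : SimpleGraph V} {G H : SimpleGraph W} {k : ℕ}

theorem support_deleteIncidenceSet_subset (z : W) :
    (H.deleteIncidenceSet z).support ⊆ H.support \ {z} := fun _ ⟨t, hwt⟩ =>
  have hwt := deleteIncidenceSet_adj.mp hwt
  ⟨⟨t, hwt.1⟩, hwt.2.1⟩

theorem support_deleteIncidenceSet_sup_edge_subset {z x y : W} (hzx : H.Adj z x)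
    (hzy : H.Adj z y) : (H.deleteIncidenceSet z ⊔ edge x y).support ⊆ H.support \ {z} := by
  rintro w ⟨t, hwt | hwt⟩
  · exact support_deleteIncidenceSet_subset z ⟨t, hwt⟩
  · rcases (edge_adj _ _ _ _).mp hwt with ⟨⟨rfl, -⟩ | ⟨rfl, -⟩, -⟩
    exacts [⟨⟨z, hzx.symm⟩, hzx.ne'⟩, ⟨⟨z, hzy.symm⟩, hzy.ne'⟩]

theorem deleteIncidenceSet_sup_edge_le_map {z x y : W} (hzy : H.Adj z y)
    (hxy : x ≠ y) : H.deleteIncidenceSet z ⊔ edge x y ≤ H.map (contractTo {x, z} x) := by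
  have hfix : ∀ t, t ≠ z → contractTo {x, z} x t = t := fun t htz => by
    rcases eq_or_ne t x with rfl | htx
    · exact contractTo_of_mem (by simp)
    · exact contractTo_of_notMem (by simp [htx, htz])
  have hxy' : (H.map (contractTo {x, z} x)).Adj x y :=
    map_contractTo_adj (by simp) (by simp) (by simp [Ne.symm hxy, hzy.ne']) hzy
  rintro a b (hab | hab)
  · obtain ⟨hab, ha, hb⟩ := deleteIncidenceSet_adj.mp hab
    have := map_adj_apply' (f := contractTo {x, z} x) hab
    rw [hfix a ha, hfix b hb] at this
    exact this hab.ne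
  · rcases (edge_adj _ _ _ _).mp hab with ⟨⟨rfl, rfl⟩ | ⟨rfl, rfl⟩, -⟩
    exacts [hxy', hxy'.symm]

theorem exists_realizes [Finite W] (hk : 1 ≤ k) (hBc : B.Connected)
    (hPD : IsPartialDistGraph B Bt k) (hAll : AllKGoodTripleProp B Bt k)
    (hG : oddGirthAtLeast G (2 * k + 1)) (H : SimpleGraph W) (hH : ¬HasK4Minor H) :
    ∃ φ, Realizes B Bt G k H φ := by
  classical
  induction hn : H.support.ncard using Nat.strong_induction_on generalizing H with
  | _ n ihn =>
  have ih : ∀ H' z, H'.support ⊆ H.support \ {z} → z ∈ H.support → ¬HasK4Minor H' →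
      ∃ φ, Realizes B Bt G k H' φ := fun H' z hsub hz hH' => ihn _ (hn ▸ Set.ncard_lt_ncard
        (hsub.trans_ssubset (Set.sdiff_singleton_ssubset.mpr hz))) H' hH' rfl
  obtain ⟨x₀, y₀, h₀⟩ := hAll.1
  by_cases hE : ∃ a b, H.Adj a b
  swap
  · push Not at hE
    exact ⟨fun _ => x₀, fun _ => ⟨y₀, h₀⟩, fun a b hab => absurd hab (hE a b)⟩
  obtain ⟨a, b, hab⟩ := hE
  -- remove a vertex `z` of degree one or two
  obtain ⟨z, ⟨x, hzx⟩, hz⟩ := exists_mem_support_encard_neighborSet_lt_three hH hab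
  by_cases hy : ∃ y, H.Adj z y ∧ y ≠ x
  · obtain ⟨y, hzy, hyx⟩ := hy
    have hN : ∀ t, H.Adj z t → t = x ∨ t = y := fun t hzt => by
      by_contra! ht
      exact hz.not_ge (Set.three_le_encard_of_mem hzx hzy hzt (Ne.symm hyx) (Ne.symm ht.1)
        (Ne.symm ht.2))
    obtain ⟨φ, hφ⟩ := ih _ z (support_deleteIncidenceSet_sup_edge_subset hzx hzy) ⟨x, hzx⟩
      fun hK => hH <| (hK.mono (deleteIncidenceSet_sup_edge_le_map hzy (Ne.symm hyx))).of_map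
        (preconnected_induce_preimage_contractTo (induce_pair_connected_of_adj hzx.symm)
          (by simp))
    obtain ⟨z₁, hz₁⟩ := hφ.exists_update_of_adj_adj hk hG hAll hzx hzy (Ne.symm hyx) hN
    exact ⟨_, hz₁⟩
  · push Not at hy
    obtain ⟨φ, hφ⟩ := ih _ z (support_deleteIncidenceSet_subset z) ⟨x, hzx⟩
      fun hK => hH (hK.mono (deleteIncidenceSet_le _ _))
    obtain ⟨z₁, hz₁⟩ := hφ.exists_update_of_unique_adj hk hBc hPD hAll hzx.ne hy
    exact ⟨_, hz₁⟩

end Extension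

theorem bound_of_allKGoodTriple_general {V W : Type*} [Fintype W] (k : ℕ)
    (B Bt : SimpleGraph V) (hBc : B.Connected)
    (hPD : IsPartialDistGraph B Bt k)
    (hAll : AllKGoodTripleProp B Bt k)
    (G : SimpleGraph W) (h1 : ¬ HasK4Minor G) (h2 : oddGirthAtLeast G (2*k+1)) :
    Nonempty (G →g B) := by
  obtain ⟨x₀, y₀, h₀⟩ := hAll.1
  have hk : 1 ≤ k := (hBc.pos_dist_of_ne h₀.ne).trans_le (hPD x₀ y₀ h₀)
  obtain ⟨φ, hφ⟩ := exists_realizes hk hBc hPD hAll h2 G h1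
  refine ⟨⟨φ, fun {a b} hab => ?_⟩⟩
  have := (hφ.adj a b hab).2
  rwa [cappedDist_of_adj hk hab, dist_eq_one_iff_adj] at this

/-- If `B` is a connected graph of odd-girth `2k+1` admitting a `k`-partial distance
graph with the all `k`-good triple property, then every finite `K₄`-minor-free graph
of odd-girth at least `2k+1` admits a homomorphism to `B`. -/
theorem bound_of_allKGoodTriple {V W : Type*} [Fintype W] (k : ℕ) (hk : 1 ≤ k)
    (B Bt : SimpleGraph V) (hBc : B.Connected)
    (hOG : hasOddGirth B (2*k+1))
    (hPD : IsPartialDistGraph B Bt k)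
    (hAll : AllKGoodTripleProp B Bt k)
    (G : SimpleGraph W) (h1 : ¬ HasK4Minor G) (h2 : oddGirthAtLeast G (2*k+1)) :
    Nonempty (G →g B) :=
  bound_of_allKGoodTriple_general k B Bt hBc hPD hAll G h1 h2
end

section
/- Let B be a graph of odd-girth 2k+1 and let (B̃, d_B) be a k-partial distance graph of B with the all k-good triple property. Then for every edge xy of B̃, there is a cycle of length 2k+1 in B containing both x and y. -/
/-! Let `p = d(x,y)`, so `1 ≤ p ≤ k`. The triple `{p, k, k + 1 - p}` has odd sum `2k+1`, hence is
`k`-good, and the all `k`-good triple property yields `z` with `d(x,z) = k`, `d(y,z) = k + 1 - p`.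
Geodesics `x → y → z → x` then form a closed walk of length `2k+1` through `x` and `y`. In a graph
of odd-girth `2k+1` such a walk is a cycle: a closed walk of odd length that is not a cycle splits
at a repeated vertex into two shorter closed walks, one of which is odd, so by induction every odd
closed walk has length at least `2k+1`, and one that is not a cycle has length greater than that. -/

open SimpleGraph

namespace SimpleGraph.Walk

variable {V : Type*} {G : SimpleGraph V}

lemma exists_nonempty_loop_of_not_isPath {a b : V} (p : G.Walk a b)
    (hp : ¬ p.IsPath) :
    ∃ (u : V) (c : G.Walk u u) (r : G.Walk a b), 0 < c.length ∧ c.length + r.length = p.length := by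
  classical
  induction p with
  | nil => exact absurd IsPath.nil hp
  | @cons a a' b h q ih =>
    by_cases hq : q.IsPath
    · have ha : a ∈ q.support := by simpa [cons_isPath_iff, hq] using hp
      refine ⟨a, cons h (q.takeUntil a ha), q.dropUntil a ha, by simp, ?_⟩
      rw [length_cons, length_cons, add_right_comm, ← length_append, take_spec]
    · obtain ⟨u, c, r, hc, hlen⟩ := ih hq
      exact ⟨u, c, cons h r, hc, by simp only [length_cons]; omega⟩

lemma exists_shorter_odd_loop_of_not_isCycle {v : V} (w : G.Walk v v) (hodd : Odd w.length)
    (hw : ¬ w.IsCycle) : ∃ (u : V) (c : G.Walk u u), Odd c.length ∧ c.length < w.length := by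
  classical
  cases w with
  | nil => simp at hodd
  | cons h q =>
    rw [length_cons] at hodd ⊢
    have hq : ¬ q.IsPath := by
      intro hq
      have hq0 : q.length ≠ 0 := fun h0 => h.ne (q.eq_of_length_eq_zero h0).symm
      refine hw (isCycle_iff_isPath_tail_and_le_length.mpr ⟨by simpa using hq, ?_⟩)
      rw [length_cons]
      grind
    obtain ⟨u, c, r, hc, hlen⟩ := exists_nonempty_loop_of_not_isPath q hq
    rcases Nat.even_or_odd c.length with hceven | hcodd
    · have hsum : Odd (c.length + (cons h r).length) := by
        rwa [length_cons, ← add_assoc, hlen]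
      exact ⟨v, cons h r, (Nat.odd_add'.mp hsum).mpr hceven, by rw [length_cons]; omega⟩
    · exact ⟨u, c, hcodd, by omega⟩

end SimpleGraph.Walk

theorem oddGirthAtLeast.le_length_of_odd {V : Type*} {G : SimpleGraph V} {m : ℕ}
    (hG : oddGirthAtLeast G m) {v : V} (w : G.Walk v v) (hodd : Odd w.length) :
    m ≤ w.length := by
  induction h : w.length using Nat.strong_induction_on generalizing v with
  | _ n ih =>
    subst h
    by_cases hw : w.IsCycle
    · exact hG v w hw hodd
    · obtain ⟨u, c, hc, hlt⟩ := w.exists_shorter_odd_loop_of_not_isCycle hodd hw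
      exact (ih _ hlt c hc rfl).trans hlt.le

theorem oddGirthAtLeast.isCycle_of_length_le {V : Type*} {G : SimpleGraph V} {m : ℕ}
    (hG : oddGirthAtLeast G m) {v : V} (w : G.Walk v v) (hodd : Odd w.length)
    (hle : w.length ≤ m) : w.IsCycle := by
  by_contra hw
  obtain ⟨u, c, hc, hlt⟩ := w.exists_shorter_odd_loop_of_not_isCycle hodd hw
  exact (hG.le_length_of_odd c hc).not_gt (hlt.trans_le hle)

theorem kGoodTriple_of_add_eq {k p q r : ℕ} (hp : 1 ≤ p) (hpk : p ≤ k) (hq : 1 ≤ q) (hqk : q ≤ k)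
    (hr : 1 ≤ r) (hrk : r ≤ k) (h : p + q + r = 2 * k + 1) : kGoodTriple k p q r := by
  refine ⟨hp, hpk, hq, hqk, hr, hrk, fun _ => h.ge, fun heven => ?_⟩
  rw [h] at heven
  exact absurd heven (Nat.not_even_iff_odd.mpr (odd_two_mul_add_one k))

theorem SimpleGraph.Connected.exists_loop_length_eq_dist_add {V : Type*} {G : SimpleGraph V}
    (hG : G.Connected) (x y z : V) :
    ∃ w : G.Walk x x, w.length = G.dist x y + G.dist y z + G.dist z x ∧ y ∈ w.support := by
  obtain ⟨wxy, hxy⟩ := (hG x y).exists_walk_length_eq_dist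
  obtain ⟨wyz, hyz⟩ := (hG y z).exists_walk_length_eq_dist
  obtain ⟨wzx, hzx⟩ := (hG z x).exists_walk_length_eq_dist
  refine ⟨(wxy.append wyz).append wzx, by simp only [Walk.length_append, *], ?_⟩
  simp

theorem edge_on_cycle_of_allKGoodTriple_general {V : Type*} (k : ℕ)
    (B Bt : SimpleGraph V) (hBc : B.Connected)
    (hOG : hasOddGirth B (2*k+1))
    (hPD : IsPartialDistGraph B Bt k)
    (hAll : AllKGoodTripleProp B Bt k)
    (x y : V) (hxy : Bt.Adj x y) :
    ∃ (v : V) (w : B.Walk v v),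
      w.IsCycle ∧ w.length = 2*k+1 ∧ x ∈ w.support ∧ y ∈ w.support := by
  have hp : 1 ≤ B.dist x y := hBc.pos_dist_of_ne hxy.ne
  have hpk : B.dist x y ≤ k := hPD x y hxy
  obtain ⟨z, -, -, -, -, -, hxz, hyz, -, -⟩ := hAll.2 x y hxy k (k + 1 - B.dist x y)
    (kGoodTriple_of_add_eq hp hpk (hp.trans hpk) le_rfl (by omega) (by omega) (by omega))
  obtain ⟨w, hlen, hy⟩ := hBc.exists_loop_length_eq_dist_add x y z
  have hlen' : w.length = 2 * k + 1 := by
    rw [hlen, B.dist_comm (u := z), hxz, hyz]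
    omega
  exact ⟨x, w, hOG.1.isCycle_of_length_le w (hlen' ▸ odd_two_mul_add_one k) hlen'.le, hlen',
    w.start_mem_support, hy⟩

/-- If `B` is connected of odd-girth `2k+1` and `Bt` is a `k`-partial distance graph
of `B` with the all `k`-good triple property, then every edge of `Bt` lies on a
`(2k+1)`-cycle of `B` (through both of its endpoints). -/
theorem edge_on_cycle_of_allKGoodTriple {V : Type*} (k : ℕ) (hk : 1 ≤ k)
    (B Bt : SimpleGraph V) (hBc : B.Connected)
    (hOG : hasOddGirth B (2*k+1))
    (hPD : IsPartialDistGraph B Bt k)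
    (hAll : AllKGoodTripleProp B Bt k)
    (x y : V) (hxy : Bt.Adj x y) :
    ∃ (v : V) (w : B.Walk v v),
      w.IsCycle ∧ w.length = 2*k+1 ∧ x ∈ w.support ∧ y ∈ w.support :=
  edge_on_cycle_of_allKGoodTriple_general k B Bt hBc hOG hPD hAll x y hxy
end

section
/- Let B be a graph and let (B̃, d_B) be a k-partial distance graph of B with the all k-good triple property. Then for each integer p with 1 ≤ p ≤ k, B̃ contains an edge of weight p, i.e., there exist vertices x, y adjacent in B̃ with d_B(x,y) = p. -/
open SimpleGraph

/-- The sum `p + q + |p - q| = 2 max p q` is even, so only the triangle inequalities matter. -/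
lemma kGoodTriple_absDiff {k p q : ℕ} (hp : 1 ≤ p) (hpk : p ≤ k) (hq : 1 ≤ q) (hqk : q ≤ k)
    (hpq : p ≠ q) : kGoodTriple k p q (p - q + (q - p)) := by
  refine ⟨hp, hpk, hq, hqk, by omega, by omega, ?_, fun _ => by omega⟩
  rintro ⟨m, hm⟩
  omega

lemma AllKGoodTripleProp.exists_adj_dist_eq {V : Type*} {B Bt : SimpleGraph V} {k : ℕ}
    (hAll : AllKGoodTripleProp B Bt k) {x y : V} (hxy : Bt.Adj x y)
    (hw : 1 ≤ B.dist x y) (hwk : B.dist x y ≤ k) {p : ℕ} (hp : 1 ≤ p) (hpk : p ≤ k) :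
    ∃ z, Bt.Adj x z ∧ B.dist x z = p := by
  by_cases hwp : B.dist x y = p
  · exact ⟨y, hxy, hwp⟩
  · obtain ⟨z, -, hxz, -, -, -, hdist, -⟩ :=
      hAll.2 x y hxy p _ (kGoodTriple_absDiff hw hwk hp hpk hwp)
    exact ⟨z, hxz, hdist⟩

theorem edge_of_each_weight_of_allKGoodTriple_general {V : Type*} (k : ℕ)
    (B Bt : SimpleGraph V) (hBc : B.Connected)
    (hPD : IsPartialDistGraph B Bt k)
    (hAll : AllKGoodTripleProp B Bt k)
    (p : ℕ) (hp : 1 ≤ p) (hp' : p ≤ k) :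
    ∃ x y, Bt.Adj x y ∧ B.dist x y = p := by
  obtain ⟨x, y, hxy⟩ := hAll.1
  obtain ⟨z, hxz, hdist⟩ :=
    hAll.exists_adj_dist_eq hxy (hBc.pos_dist_of_ne hxy.ne) (hPD x y hxy) hp hp'
  exact ⟨x, z, hxz, hdist⟩

/-- If a `k`-partial distance graph `Bt` of a connected graph `B` has the all
`k`-good triple property, then for every `p` with `1 ≤ p ≤ k` there is an edge of
`Bt` of weight `p`. -/
theorem edge_of_each_weight_of_allKGoodTriple {V : Type*} (k : ℕ) (hk : 1 ≤ k)
    (B Bt : SimpleGraph V) (hBc : B.Connected)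
    (hPD : IsPartialDistGraph B Bt k)
    (hAll : AllKGoodTripleProp B Bt k)
    (p : ℕ) (hp : 1 ≤ p) (hp' : p ≤ k) :
    ∃ x y, Bt.Adj x y ∧ B.dist x y = p :=
  edge_of_each_weight_of_allKGoodTriple_general k B Bt hBc hPD hAll p hp hp'
end

section
/- In the augmented toroidal grid AT(2k,2k), the distance between two vertices u and v equals min{d_T(u,v), 2k+1 − d_T(u,v)}, where d_T denotes distance in the toroidal grid T(2k,2k) = C_{2k} □ C_{2k}. -/
/-!
The distance of the toroidal grid is the sum of the cyclic distances
`|x| = x.valMinAbs.natAbs` of the coordinates of `v - u`, and in `ZMod (2k)` one has `|x + k| = k - |x|`; hence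
`d_T(ū, v) = 2k - d_T(u, v)`. For the upper bound, go along the torus, or take the antipodal
edge first. For the lower bound, `w ↦ min (d_T(w, v)) (2k + 1 - d_T(w, v))` vanishes at `v`
and changes by at most one along every edge of `AT(2k,2k)`, torus edges and antipodal edges alike.
-/

open SimpleGraph

/-- The toroidal grid `T(2k,2k) = C_{2k} □ C_{2k}`. -/
def torusGrid (k : ℕ) : SimpleGraph (ZMod (2*k) × ZMod (2*k)) :=
  SimpleGraph.fromRel fun a b =>
    (a.1 = b.1 ∧ b.2 = a.2 + 1) ∨ (a.2 = b.2 ∧ b.1 = a.1 + 1)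

/-- The augmented toroidal grid `AT(2k,2k)`: the toroidal grid `T(2k,2k)` with
an edge added between each vertex `v` and its antipodal vertex `v + (k,k)`. -/
def augTorusGrid (k : ℕ) : SimpleGraph (ZMod (2*k) × ZMod (2*k)) :=
  SimpleGraph.fromRel fun a b =>
    (a.1 = b.1 ∧ b.2 = a.2 + 1) ∨ (a.2 = b.2 ∧ b.1 = a.1 + 1) ∨
    b = a + ((k : ZMod (2*k)), (k : ZMod (2*k)))

theorem ZMod.natAbs_valMinAbs_sub_le_add_one {n : ℕ} [NeZero n] {a b : ZMod n}
    (hab : a - b = 1 ∨ b - a = 1) (y : ZMod n) :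
    (y - a).valMinAbs.natAbs ≤ (y - b).valMinAbs.natAbs + 1 := by
  have hba : (b - a).valMinAbs.natAbs ≤ 1 := by
    have h_one : (1 : ZMod n).valMinAbs.natAbs ≤ 1 := by
      rw [ZMod.valMinAbs_natAbs_eq_min, ZMod.val_one_eq_one_mod]
      exact (min_le_left _ _).trans (Nat.mod_le 1 n)
    rcases hab with h | h
    · rwa [← neg_sub, ZMod.natAbs_valMinAbs_neg, h]
    · rwa [h]
  calc (y - a).valMinAbs.natAbs = ((y - b) + (b - a)).valMinAbs.natAbs := by
        rw [sub_add_sub_cancel]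
    _ ≤ ((y - b).valMinAbs + (b - a).valMinAbs).natAbs := ZMod.natAbs_valMinAbs_add_le _ _
    _ ≤ (y - b).valMinAbs.natAbs + 1 := (Int.natAbs_add_le _ _).trans (by omega)

theorem ZMod.natAbs_valMinAbs_add_half_add_self (k : ℕ) [NeZero k] (x : ZMod (2*k)) :
    (x + k).valMinAbs.natAbs + x.valMinAbs.natAbs = k := by
  have hx := x.val_lt
  have hk : ((k : ℕ) : ZMod (2*k)).val = k := ZMod.val_cast_of_lt (by have := NeZero.pos k; omega)
  rw [ZMod.valMinAbs_natAbs_eq_min, ZMod.valMinAbs_natAbs_eq_min, ZMod.val_add, hk]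
  rcases lt_or_ge (x.val + k) (2*k) with h | h
  · rw [Nat.mod_eq_of_lt h]; omega
  · rw [Nat.mod_eq_sub_mod h, Nat.mod_eq_of_lt (by omega)]; omega

namespace SimpleGraph

variable {V : Type*} {G : SimpleGraph V}

theorem le_add_dist_of_forall_adj {f : V → ℕ} (hf : ∀ a b, G.Adj a b → f a ≤ f b + 1)
    {u v : V} (h : G.Reachable u v) : f u ≤ f v + G.dist u v := by
  obtain ⟨p, hp⟩ := h.exists_walk_length_eq_dist
  rw [← hp]
  clear hp h
  induction p with
  | nil => simp
  | cons hadj p ih =>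
    have := hf _ _ hadj
    rw [Walk.length_cons]
    omega

theorem dist_sup_fromRel_eq_min (hG : G.Connected) (σ : V → V) (N : ℕ)
    (hσ : ∀ u v, G.dist (σ u) v + G.dist u v = N) (u v : V) :
    (G ⊔ fromRel fun a b => b = σ a).dist u v = min (G.dist u v) (N + 1 - G.dist u v) := by
  set H := G ⊔ fromRel fun a b => b = σ a
  have hGH : G ≤ H := le_sup_left
  have hH : H.Connected := hG.mono hGH
  apply le_antisymm
  · refine le_min ((hG u v).dist_anti hGH) ?_
    have hσu : H.dist u (σ u) ≤ 1 := by
      by_cases h : u = σ u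
      · rw [← h, dist_self]; exact zero_le_one
      · exact (dist_eq_one_iff_adj.mpr (Or.inr ⟨h, Or.inl rfl⟩)).le
    calc H.dist u v ≤ H.dist u (σ u) + H.dist (σ u) v := hH.dist_triangle
      _ ≤ 1 + G.dist (σ u) v := add_le_add hσu ((hG _ v).dist_anti hGH)
      _ = N + 1 - G.dist u v := by have := hσ u v; omega
  · have key := le_add_dist_of_forall_adj (G := H)
      (f := fun w => min (G.dist w v) (N + 1 - G.dist w v)) ?_ (hH u v)
    · simpa using key
    rintro a b (hab | ⟨-, rfl | rfl⟩)
    · have h₁ : G.dist a v ≤ G.dist a b + G.dist b v := hG.dist_triangle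
      have h₂ : G.dist b v ≤ G.dist b a + G.dist a v := hG.dist_triangle
      rw [dist_eq_one_iff_adj.mpr hab] at h₁
      rw [dist_eq_one_iff_adj.mpr hab.symm] at h₂
      have := hσ a v
      have := hσ b v
      omega
    · have := hσ a v; omega
    · have := hσ b v; omega

theorem dist_boxProd {W : Type*} {H : SimpleGraph W} {x y : V × W}
    (h₁ : G.Reachable x.1 y.1) (h₂ : H.Reachable x.2 y.2) :
    (G □ H).dist x y = G.dist x.1 y.1 + H.dist x.2 y.2 := by
  have h : (G □ H).Reachable x y := reachable_boxProd.mpr ⟨h₁, h₂⟩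
  have h_cast := h.coe_dist_eq_edist
  rw [edist_boxProd, ← h₁.coe_dist_eq_edist, ← h₂.coe_dist_eq_edist] at h_cast
  exact_mod_cast h_cast

section cycle

variable {n : ℕ}

theorem circulantGraph_one_adj_add_one_or_eq (x : ZMod n) :
    (circulantGraph ({1} : Set (ZMod n))).Adj x (x + 1) ∨ x = x + 1 := by
  by_cases h : x = x + 1
  · exact Or.inr h
  · exact Or.inl ⟨h, Or.inr (by simp)⟩

theorem circulantGraph_one_dist_add_one_le (x : ZMod n) :
    (circulantGraph ({1} : Set (ZMod n))).dist x (x + 1) ≤ 1 := by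
  rcases circulantGraph_one_adj_add_one_or_eq x with h | h
  · exact (dist_eq_one_iff_adj.mpr h).le
  · rw [← h, dist_self]; exact zero_le_one

theorem circulantGraph_one_connected [NeZero n] :
    (circulantGraph ({1} : Set (ZMod n))).Connected := by
  have reach_add (x : ZMod n) (m : ℕ) :
      (circulantGraph {1}).Reachable x (x + (m : ZMod n)) := by
    induction m with
    | zero => simp
    | succ m ih =>
      rw [Nat.cast_succ, ← add_assoc]
      rcases circulantGraph_one_adj_add_one_or_eq (x + (m : ZMod n)) with h | h
      · exact ih.trans h.reachable
      · rwa [← h]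
  refine Connected.mk fun x y => ?_
  simpa using reach_add x (y - x).val

theorem circulantGraph_one_dist_add_natCast_le [NeZero n] (x : ZMod n) (m : ℕ) :
    (circulantGraph ({1} : Set (ZMod n))).dist x (x + m) ≤ m := by
  induction m with
  | zero => simp
  | succ m ih =>
    calc _ ≤ (circulantGraph {1}).dist x (x + m)
          + (circulantGraph {1}).dist (x + m) (x + m + 1) := by
          rw [Nat.cast_succ, ← add_assoc]; exact circulantGraph_one_connected.dist_triangle
      _ ≤ m + 1 := add_le_add ih (circulantGraph_one_dist_add_one_le _)

theorem circulantGraph_one_dist [NeZero n] (x y : ZMod n) :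
    (circulantGraph ({1} : Set (ZMod n))).dist x y = (y - x).valMinAbs.natAbs := by
  have hC := circulantGraph_one_connected (n := n)
  apply le_antisymm
  · obtain ⟨m, hm | hm⟩ : ∃ m : ℕ, (y - x).valMinAbs = m ∨ (y - x).valMinAbs = -m :=
      ⟨_, Int.natAbs_eq _⟩
    · have hy : y = x + m := by
        rw [← sub_eq_iff_eq_add', ← ZMod.coe_valMinAbs (y - x), hm, Int.cast_natCast]
      rw [hm, Int.natAbs_natCast, hy]
      exact circulantGraph_one_dist_add_natCast_le x m
    · have hx : x = y + m := by
        rw [← sub_eq_iff_eq_add', ← neg_sub, ← ZMod.coe_valMinAbs (y - x), hm]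
        push_cast; ring
      rw [hm, Int.natAbs_neg, Int.natAbs_natCast, dist_comm, hx]
      exact circulantGraph_one_dist_add_natCast_le y m
  · have key := le_add_dist_of_forall_adj (G := circulantGraph {1})
      (f := fun w => (y - w).valMinAbs.natAbs) ?_ (hC x y)
    · simpa using key
    rintro a b ⟨-, hab⟩
    exact ZMod.natAbs_valMinAbs_sub_le_add_one (by simpa using hab) y

end cycle

end SimpleGraph

theorem torusGrid_eq_boxProd (k : ℕ) [NeZero k] :
    torusGrid k = circulantGraph {1} □ circulantGraph {1} := by
  ext a b
  simp only [torusGrid, fromRel_adj, boxProd_adj, circulantGraph_adj, Set.mem_singleton_iff,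
    sub_eq_iff_eq_add']
  have h_one : (1 : ZMod (2*k)) ≠ 0 := by
    have := NeZero.pos k
    intro h
    simpa [ZMod.val_one'' (show 2*k ≠ 1 by omega)] using congrArg ZMod.val h
  grind

theorem torusGrid_connected (k : ℕ) [NeZero k] : (torusGrid k).Connected := by
  rw [torusGrid_eq_boxProd]
  exact circulantGraph_one_connected.boxProd circulantGraph_one_connected

theorem torusGrid_dist (k : ℕ) [NeZero k] (u v : ZMod (2*k) × ZMod (2*k)) :
    (torusGrid k).dist u v = (v.1 - u.1).valMinAbs.natAbs + (v.2 - u.2).valMinAbs.natAbs := by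
  rw [torusGrid_eq_boxProd, dist_boxProd (circulantGraph_one_connected _ _)
    (circulantGraph_one_connected _ _), circulantGraph_one_dist, circulantGraph_one_dist]

theorem torusGrid_dist_add_antipode (k : ℕ) [NeZero k] (u v : ZMod (2*k) × ZMod (2*k)) :
    (torusGrid k).dist (u + ((k : ZMod (2*k)), (k : ZMod (2*k)))) v + (torusGrid k).dist u v
      = 2*k := by
  have hkk : (k : ZMod (2*k)) + k = 0 := by
    rw [← two_mul]; exact_mod_cast ZMod.natCast_self (2*k)
  have sub_antipode (a b : ZMod (2*k)) : b - (a + k) = (b - a) + k := by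
    linear_combination -hkk
  simp only [torusGrid_dist, Prod.fst_add, Prod.snd_add, sub_antipode]
  have := ZMod.natAbs_valMinAbs_add_half_add_self k (v.1 - u.1)
  have := ZMod.natAbs_valMinAbs_add_half_add_self k (v.2 - u.2)
  omega

theorem augTorusGrid_eq_sup (k : ℕ) :
    augTorusGrid k =
      torusGrid k ⊔ fromRel fun a b => b = a + ((k : ZMod (2*k)), (k : ZMod (2*k))) := by
  ext a b
  simp only [augTorusGrid, torusGrid, sup_adj, fromRel_adj]
  tauto

/-- In `AT(2k,2k)`, the distance between `u` and `v` is
`min (d_T(u,v)) (2k+1 - d_T(u,v))`, where `d_T` is the distance in `T(2k,2k)`. -/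
theorem augTorusGrid_dist (k : ℕ) (hk : 1 ≤ k) (u v : ZMod (2*k) × ZMod (2*k)) :
    (augTorusGrid k).dist u v =
      min ((torusGrid k).dist u v) (2*k+1 - (torusGrid k).dist u v) := by
  have : NeZero k := ⟨by omega⟩
  rw [augTorusGrid_eq_sup]
  exact dist_sup_fromRel_eq_min (torusGrid_connected k) _ (2*k)
    (torusGrid_dist_add_antipode k) u v
end

section
/- The augmented toroidal grid AT(2k,2k) is a subgraph of the projective hypercube PC(2k), has odd-girth exactly 2k+1, is vertex-transitive, and every two of its vertices lie on a common cycle of length 2k+1. -/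
/-!
Reading each coordinate of `ℤ_{2k}` through the standard embedding of `C_{2k}` into the cube
`Q_k` sends the grid steps to unit vectors and the antipodal step `(k,k)` to the all-ones vector,
so `AT(2k,2k)` embeds in `PC(2k)`. In a closed walk of `PC(2k)` that uses the all-ones vector `m`
times and `e_j` `c_j` times, every `m + c_j` is even; if the length `m + ∑ c_j` is odd, then `m`
is odd, every `c_j` is at least `1`, and the length is at least `2k+1`. This bound pulls back along
the embedding.

Translations are automorphisms. Since `-k = k` in `ℤ_{2k}`, a monotone lattice path of `2k` steps
from `u` to `u + (±k, ±k)` closes up through an antipodal edge into a `(2k+1)`-cycle; choosing the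
signs so that `v - u = (±a, ±b)` with `a, b ≤ k`, the path can be routed through `v`.
-/

open SimpleGraph

/-- The projective hypercube `PC(2k)`: the Cayley graph on `ℤ₂^{2k}` with connection
set consisting of the `2k` standard basis vectors and the all-ones vector. -/
def PC (k : ℕ) : SimpleGraph (Fin (2*k) → ZMod 2) :=
  SimpleGraph.fromRel fun x y =>
    (∃ i : Fin (2*k), y = x + fun j => if j = i then 1 else 0) ∨
    y = x + fun _ => 1

namespace SimpleGraph

variable {V : Type*}

def OnCommonCycle (G : SimpleGraph V) (n : ℕ) (u v : V) : Prop :=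
  ∃ (x : V) (w : G.Walk x x), w.IsCycle ∧ w.length = n ∧ u ∈ w.support ∧ v ∈ w.support

variable {G : SimpleGraph V}

theorem mem_support_cycleGraph_cycle {m : ℕ} (a : Fin (m + 3)) :
    a ∈ (cycleGraph.cycle m).support := by
  have h := (cycleGraph.cycle m).getVert_mem_support (m + 3 - a)
  rw [cycleGraph.getVert_cycle (by omega)] at h
  convert h
  simp [Nat.sub_sub_self a.isLt.le, Nat.mod_eq_of_lt a.isLt]

theorem onCommonCycle_of_adj_succ {n : ℕ} (hn : 2 ≤ n) {p : ℕ → V}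
    (hp : Set.InjOn p (Set.Iic n)) (hadj : ∀ t < n, G.Adj (p t) (p (t + 1)))
    (hclose : G.Adj (p n) (p 0)) {i j : ℕ} (hi : i ≤ n) (hj : j ≤ n) :
    G.OnCommonCycle (n + 1) (p i) (p j) := by
  obtain ⟨m, rfl⟩ : ∃ m, n = m + 2 := ⟨n - 2, by omega⟩
  have hsucc : ∀ a : Fin (m + 3), G.Adj (p a) (p ↑(a + 1)) := by
    intro a
    rw [Fin.val_add_one]
    split_ifs with h
    · subst h
      exact hclose
    · exact hadj a (by have := Fin.val_lt_last h; omega)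
  let f : cycleGraph (m + 3) →g G :=
    ⟨fun a => p a, fun {a b} hab => by
      rcases (cycleGraph_adj (n := m + 1)).mp hab with h | h
      · rw [sub_eq_iff_eq_add'.mp h]
        exact (hsucc b).symm
      · rw [sub_eq_iff_eq_add'.mp h]
        exact hsucc a⟩
  have hf : Function.Injective f := fun a b hab =>
    Fin.ext (hp (by simp; omega) (by simp; omega) hab)
  refine ⟨_, (cycleGraph.cycle m).map f, (Walk.isCycle_map_iff_of_injective hf).mpr
    cycleGraph.isCycle_cycle, by simp, ?_, ?_⟩ <;>
    rw [Walk.support_map] <;>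
    exact List.mem_map_of_mem (mem_support_cycleGraph_cycle ⟨_, by omega⟩)

end SimpleGraph

section Sign

variable {R : Type*} [Ring R] {ε : R}

theorem mul_self_eq_one_of_sign (hε : ε = 1 ∨ ε = -1) : ε * ε = 1 := by
  rcases hε with rfl | rfl <;> simp

theorem mul_left_cancel_of_sign (hε : ε = 1 ∨ ε = -1) {x y : R} (h : ε * x = ε * y) : x = y := by
  rw [← one_mul x, ← one_mul y, ← mul_self_eq_one_of_sign hε, mul_assoc, mul_assoc, h]

end Sign

theorem ZMod.eq_of_natCast_eq_of_lt {n x y : ℕ} (hx : x < n) (hy : y < n)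
    (h : (x : ZMod n) = y) : x = y := by
  simpa [ZMod.val_cast_of_lt hx, ZMod.val_cast_of_lt hy] using congrArg ZMod.val h

section AugTorusGrid

variable {k : ℕ}

theorem neg_natCast_eq_of_two_mul : -((k : ℕ) : ZMod (2 * k)) = k := by
  rw [neg_eq_iff_add_eq_zero, ← Nat.cast_add, ← two_mul, ZMod.natCast_self]

def augTorusStep (k : ℕ) (d : ZMod (2 * k) × ZMod (2 * k)) : Prop :=
  d = (1, 0) ∨ d = (-1, 0) ∨ d = (0, 1) ∨ d = (0, -1) ∨
    d = ((k : ZMod (2 * k)), (k : ZMod (2 * k)))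

theorem augTorusGrid_adj_iff {a b : ZMod (2 * k) × ZMod (2 * k)} :
    (augTorusGrid k).Adj a b ↔ a ≠ b ∧ augTorusStep k (b - a) := by
  obtain ⟨d, rfl⟩ : ∃ d, b = a + d := ⟨b - a, by abel⟩
  rw [augTorusGrid, fromRel_adj]
  refine and_congr_right fun _ => ?_
  simp only [augTorusStep, Prod.ext_iff, Prod.fst_add, Prod.snd_add, add_sub_cancel_left, add_assoc,
    left_eq_add, add_eq_left, add_right_inj, add_eq_zero_iff_eq_neg, Prod.fst_neg, Prod.snd_neg,
    neg_natCast_eq_of_two_mul]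
  tauto

theorem augTorusStep.ne_zero (hk : 1 ≤ k) {d : ZMod (2 * k) × ZMod (2 * k)}
    (hd : augTorusStep k d) : d ≠ 0 := by
  have : Fact (1 < 2 * k) := ⟨by omega⟩
  have hk0 : ((k : ℕ) : ZMod (2 * k)) ≠ 0 := by
    rw [Ne, ZMod.natCast_eq_zero_iff]
    exact fun h => absurd (Nat.le_of_dvd (by omega) h) (by omega)
  rcases hd with rfl | rfl | rfl | rfl | rfl <;> simp [Prod.ext_iff, hk0]

theorem augTorusGrid_adj_of_step (hk : 1 ≤ k) {a b : ZMod (2 * k) × ZMod (2 * k)}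
    (h : augTorusStep k (b - a)) : (augTorusGrid k).Adj a b :=
  augTorusGrid_adj_iff.2 ⟨fun hab => h.ne_zero hk (by rw [hab, sub_self]), h⟩

def augTorusGridAddRight (c : ZMod (2 * k) × ZMod (2 * k)) :
    augTorusGrid k ≃g augTorusGrid k where
  toEquiv := Equiv.addRight c
  map_rel_iff' := by simp [augTorusGrid_adj_iff]

theorem exists_augTorusGrid_iso_apply_eq (u v : ZMod (2 * k) × ZMod (2 * k)) :
    ∃ φ : augTorusGrid k ≃g augTorusGrid k, φ u = v :=
  ⟨augTorusGridAddRight (v - u), add_sub_cancel u v⟩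

theorem exists_sign_mul_val_le (hk : 1 ≤ k) (z : ZMod (2 * k)) :
    ∃ ε : ZMod (2 * k), (ε = 1 ∨ ε = -1) ∧ (ε * z).val ≤ k := by
  have : NeZero (2 * k) := ⟨by omega⟩
  by_cases hz : z.val ≤ k
  · exact ⟨1, .inl rfl, by rwa [one_mul]⟩
  · refine ⟨-1, .inr rfl, ?_⟩
    have := z.val_lt
    rw [neg_one_mul, ZMod.neg_val]
    split_ifs <;> omega

-- The path goes `a` steps along the first axis, `k` along the second, then `k - a` along the first.
theorem exists_monotone_lattice_path {k a b : ℕ} (ha : a ≤ k) (hb : b ≤ k) :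
    ∃ X Y : ℕ → ℕ, (∀ t ≤ 2 * k, X t + Y t = t ∧ X t ≤ k ∧ Y t ≤ k) ∧
      (∀ t < 2 * k, X (t + 1) = X t + 1 ∧ Y (t + 1) = Y t ∨
        X (t + 1) = X t ∧ Y (t + 1) = Y t + 1) ∧
      X (a + b) = a ∧ Y (a + b) = b :=
  ⟨fun t => min t a + (t - (a + k)), fun t => min (t - a) k, fun t _ => by beta_reduce; omega,
    fun t _ => by beta_reduce; omega, by beta_reduce; omega, by beta_reduce; omega⟩

theorem augTorusStep_sign_fst {ε : ZMod (2 * k)} (hε : ε = 1 ∨ ε = -1) :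
    augTorusStep k (ε, 0) := by
  rcases hε with rfl | rfl <;> simp [augTorusStep]

theorem augTorusStep_sign_snd {ε : ZMod (2 * k)} (hε : ε = 1 ∨ ε = -1) :
    augTorusStep k (0, ε) := by
  rcases hε with rfl | rfl <;> simp [augTorusStep]

theorem mul_natCast_half_of_sign {ε : ZMod (2 * k)} (hε : ε = 1 ∨ ε = -1) : ε * k = k := by
  rcases hε with rfl | rfl
  · exact one_mul _
  · rw [neg_one_mul, neg_natCast_eq_of_two_mul]

theorem augTorusGrid_onCommonCycle_add (hk : 1 ≤ k) (u : ZMod (2 * k) × ZMod (2 * k))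
    {ε₁ ε₂ : ZMod (2 * k)} (hε₁ : ε₁ = 1 ∨ ε₁ = -1) (hε₂ : ε₂ = 1 ∨ ε₂ = -1)
    {a b : ℕ} (ha : a ≤ k) (hb : b ≤ k) :
    (augTorusGrid k).OnCommonCycle (2 * k + 1) u (u + (ε₁ * a, ε₂ * b)) := by
  obtain ⟨X, Y, hXY, hstep, hXa, hYb⟩ := exists_monotone_lattice_path ha hb
  set p : ℕ → ZMod (2 * k) × ZMod (2 * k) :=
    fun t => u + (ε₁ * (X t : ZMod (2 * k)), ε₂ * (Y t : ZMod (2 * k))) with hp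
  have hinj : Set.InjOn p (Set.Iic (2 * k)) := by
    intro t ht t' ht' h
    simp only [hp, add_right_inj, Prod.ext_iff] at h
    simp only [Set.mem_Iic] at ht ht'
    have hX := ZMod.eq_of_natCast_eq_of_lt ((hXY t ht).2.1.trans_lt (by omega))
      ((hXY t' ht').2.1.trans_lt (by omega)) (mul_left_cancel_of_sign hε₁ h.1)
    have hY := ZMod.eq_of_natCast_eq_of_lt ((hXY t ht).2.2.trans_lt (by omega))
      ((hXY t' ht').2.2.trans_lt (by omega)) (mul_left_cancel_of_sign hε₂ h.2)
    rw [← (hXY t ht).1, ← (hXY t' ht').1, hX, hY]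
  have hadj : ∀ t < 2 * k, (augTorusGrid k).Adj (p t) (p (t + 1)) := by
    intro t ht
    apply augTorusGrid_adj_of_step hk
    rcases hstep t ht with ⟨h1, h2⟩ | ⟨h1, h2⟩
    · convert augTorusStep_sign_fst hε₁ using 1
      simp only [hp, h1, h2]
      ext <;> simp [mul_add]
    · convert augTorusStep_sign_snd hε₂ using 1
      simp only [hp, h1, h2]
      ext <;> simp [mul_add]
  have hX0 : X 0 = 0 := by have := hXY 0 (by omega); omega
  have hY0 : Y 0 = 0 := by have := hXY 0 (by omega); omega
  have hX2k : X (2 * k) = k := by have := hXY (2 * k) le_rfl; omega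
  have hY2k : Y (2 * k) = k := by have := hXY (2 * k) le_rfl; omega
  have hclose : (augTorusGrid k).Adj (p (2 * k)) (p 0) := by
    simp only [hp, hX0, hY0, hX2k, hY2k, mul_natCast_half_of_sign hε₁, mul_natCast_half_of_sign hε₂,
      Nat.cast_zero, mul_zero, Prod.mk_zero_zero, add_zero]
    exact (augTorusGrid_adj_of_step hk (by simp [augTorusStep])).symm
  have h := onCommonCycle_of_adj_succ (by omega) hinj hadj hclose (i := 0) (j := a + b)
    (by omega) (by omega)
  simpa [hp, hX0, hY0, hXa, hYb, Prod.mk_zero_zero] using h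

theorem augTorusGrid_onCommonCycle (hk : 1 ≤ k) (u v : ZMod (2 * k) × ZMod (2 * k)) :
    (augTorusGrid k).OnCommonCycle (2 * k + 1) u v := by
  have : NeZero (2 * k) := ⟨by omega⟩
  obtain ⟨ε₁, hε₁, ha⟩ := exists_sign_mul_val_le hk (v.1 - u.1)
  obtain ⟨ε₂, hε₂, hb⟩ := exists_sign_mul_val_le hk (v.2 - u.2)
  convert augTorusGrid_onCommonCycle_add hk u hε₁ hε₂ ha hb
  simp only [ZMod.natCast_zmod_val, ← mul_assoc, mul_self_eq_one_of_sign hε₁, mul_self_eq_one_of_sign hε₂, one_mul]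
  ext <;> simp

end AugTorusGrid

section ProjectiveCube

variable {k : ℕ}

theorem PC_adj_add_single (x : Fin (2 * k) → ZMod 2) (i : Fin (2 * k)) :
    (PC k).Adj x (x + fun j => if j = i then 1 else 0) := by
  rw [PC, fromRel_adj]
  refine ⟨fun h => ?_, .inl (.inl ⟨i, rfl⟩)⟩
  simpa using congrFun h i

theorem PC_adj_add_one (hk : 1 ≤ k) (x : Fin (2 * k) → ZMod 2) :
    (PC k).Adj x (x + fun _ => 1) := by
  rw [PC, fromRel_adj]
  refine ⟨fun h => ?_, .inl (.inr rfl)⟩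
  simpa using congrFun h ⟨0, by omega⟩

theorem PC_eq_add_of_adj {x y : Fin (2 * k) → ZMod 2} (h : (PC k).Adj x y) :
    (∃ i : Fin (2 * k), y = x + fun j => if j = i then 1 else 0) ∨ y = x + fun _ => 1 := by
  have hswap : ∀ d : Fin (2 * k) → ZMod 2, x = y + d → y = x + d := fun d h => by
    funext j
    simp [h, add_assoc, CharTwo.add_self_eq_zero]
  rw [PC, fromRel_adj] at h
  rcases h.2 with (h | h) | (⟨i, h⟩ | h)
  · exact .inl h
  · exact .inr h
  · exact .inl ⟨i, hswap _ h⟩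
  · exact .inr (hswap _ h)

theorem PC_exists_counts_of_walk {x y : Fin (2 * k) → ZMod 2} (w : (PC k).Walk x y) :
    ∃ (m : ℕ) (c : Fin (2 * k) → ℕ), w.length = m + ∑ i, c i ∧
      ∀ j, y j = x j + ((m + c j : ℕ) : ZMod 2) := by
  induction w with
  | nil => exact ⟨0, 0, by simp, by simp⟩
  | cons h p ih =>
    obtain ⟨m, c, hlen, hc⟩ := ih
    rcases PC_eq_add_of_adj h with ⟨i, rfl⟩ | rfl
    · refine ⟨m, c + fun j => if j = i then 1 else 0, ?_, fun j => ?_⟩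
      · simp [hlen, Finset.sum_add_distrib]
        omega
      · rw [hc j]
        simp only [Pi.add_apply]
        push_cast
        ring
    · refine ⟨m + 1, c, by simp [hlen]; omega, fun j => ?_⟩
      rw [hc j]
      simp only [Pi.add_apply]
      push_cast
      ring

theorem PC_le_length_of_odd {x : Fin (2 * k) → ZMod 2} (w : (PC k).Walk x x)
    (hw : Odd w.length) : 2 * k + 1 ≤ w.length := by
  obtain ⟨m, c, hlen, hc⟩ := PC_exists_counts_of_walk w
  have heven : ∀ j, Even (m + c j) := fun j =>
    ZMod.natCast_eq_zero_iff_even.mp (by simpa using hc j)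
  have hm : Odd m := by
    rw [← Nat.not_even_iff_odd]
    intro hm
    have hsum : Even (∑ i, c i) :=
      Finset.even_sum _ fun j _ => (Nat.even_add.mp (heven j)).mp hm
    exact Nat.not_even_iff_odd.mpr hw (hlen ▸ hm.add hsum)
  have hc : ∀ j, 1 ≤ c j := fun j => by
    obtain ⟨r, hr⟩ := hm
    obtain ⟨s, hs⟩ := heven j
    omega
  calc 2 * k + 1 ≤ 1 + ∑ _j : Fin (2 * k), 1 := by simp [add_comm]
    _ ≤ m + ∑ j, c j := add_le_add hm.pos (Finset.sum_le_sum fun j _ => hc j)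
    _ = w.length := hlen.symm

end ProjectiveCube

section Embedding

variable {k : ℕ}

theorem ZMod.val_add_eq_or {n : ℕ} [NeZero n] (a b : ZMod n) :
    (a + b).val = a.val + b.val ∧ a.val + b.val < n ∨
      (a + b).val = a.val + b.val - n ∧ n ≤ a.val + b.val := by
  by_cases h : a.val + b.val < n
  · exact .inl ⟨ZMod.val_add_of_lt h, h⟩
  · exact .inr ⟨ZMod.val_add_of_le (not_lt.mp h), not_lt.mp h⟩

-- Going once around `C_{2k}`, bits `0, …, k-1` are switched on in turn and then off in the same
-- order; this is the standard embedding of `C_{2k}` into `Q_k`.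
def cycleBits (k : ℕ) (x : ZMod (2 * k)) (r : ℕ) : ZMod 2 :=
  if r < x.val ∧ x.val ≤ r + k then 1 else 0

theorem cycleBits_add_one (hk : 1 ≤ k) (x : ZMod (2 * k)) :
    ∃ s < k, ∀ r < k, cycleBits k (x + 1) r = cycleBits k x r + if r = s then 1 else 0 := by
  have : NeZero (2 * k) := ⟨by omega⟩
  have h1 : (1 : ZMod (2 * k)).val = 1 := by
    rw [← Nat.cast_one, ZMod.val_cast_of_lt (by omega)]
  have hx := x.val_lt
  refine ⟨if x.val < k then x.val else x.val - k, by split_ifs <;> omega, fun r hr => ?_⟩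
  rcases ZMod.val_add_eq_or x 1 with ⟨hv, hlt⟩ | ⟨hv, hle⟩ <;>
    · simp only [cycleBits, hv, h1]
      split_ifs <;> first | omega | decide

theorem cycleBits_add_half (hk : 1 ≤ k) (x : ZMod (2 * k)) {r : ℕ} (hr : r < k) :
    cycleBits k (x + k) r = cycleBits k x r + 1 := by
  have : NeZero (2 * k) := ⟨by omega⟩
  have hkv : ((k : ℕ) : ZMod (2 * k)).val = k := ZMod.val_cast_of_lt (by omega)
  have hx := x.val_lt
  rcases ZMod.val_add_eq_or x k with ⟨hv, hlt⟩ | ⟨hv, hle⟩ <;>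
    · simp only [cycleBits, hv, hkv]
      split_ifs <;> first | omega | decide

theorem cycleBits_injective (hk : 1 ≤ k) {x y : ZMod (2 * k)}
    (h : ∀ r < k, cycleBits k x r = cycleBits k y r) : x = y := by
  have : NeZero (2 * k) := ⟨by omega⟩
  refine ZMod.val_injective _ (by_contra fun hxy => ?_)
  have hx := x.val_lt
  have hy := y.val_lt
  set v := min x.val y.val
  set w := max x.val y.val
  obtain ⟨r, hr, hne⟩ : ∃ r < k, ¬((r < x.val ∧ x.val ≤ r + k) ↔ (r < y.val ∧ y.val ≤ r + k)) :=
    ⟨if w ≤ k then w - 1 else if k ≤ v then v - k else if 0 < v then 0 else k - 1,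
      by split_ifs <;> omega, by split_ifs <;> omega⟩
  have := h r hr
  simp only [cycleBits] at this
  split_ifs at this <;> simp_all

def torusBits (k : ℕ) (p : ZMod (2 * k) × ZMod (2 * k)) : Fin (2 * k) → ZMod 2 :=
  fun t => if (t : ℕ) < k then cycleBits k p.1 t else cycleBits k p.2 (t - k)

theorem torusBits_injective (hk : 1 ≤ k) : Function.Injective (torusBits k) := by
  intro p q h
  refine Prod.ext (cycleBits_injective hk fun r hr => ?_) (cycleBits_injective hk fun r hr => ?_)
  · simpa [torusBits, hr] using congrFun h ⟨r, by omega⟩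
  · simpa [torusBits] using congrFun h ⟨k + r, by omega⟩

theorem torusBits_add_one_fst (hk : 1 ≤ k) (p : ZMod (2 * k) × ZMod (2 * k)) :
    ∃ i : Fin (2 * k),
      torusBits k (p + (1, 0)) = torusBits k p + fun j => if j = i then 1 else 0 := by
  obtain ⟨s, hs, hbits⟩ := cycleBits_add_one hk p.1
  refine ⟨⟨s, by omega⟩, funext fun t => ?_⟩
  by_cases ht : (t : ℕ) < k
  · simp [torusBits, ht, hbits t ht, Fin.ext_iff]
  · simp [torusBits, ht, Fin.ext_iff]
    omega

theorem torusBits_add_one_snd (hk : 1 ≤ k) (p : ZMod (2 * k) × ZMod (2 * k)) :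
    ∃ i : Fin (2 * k),
      torusBits k (p + (0, 1)) = torusBits k p + fun j => if j = i then 1 else 0 := by
  obtain ⟨s, hs, hbits⟩ := cycleBits_add_one hk p.2
  refine ⟨⟨k + s, by omega⟩, funext fun t => ?_⟩
  by_cases ht : (t : ℕ) < k
  · simp [torusBits, ht, Fin.ext_iff]
    omega
  · simp [torusBits, ht, hbits (t - k) (by omega), Fin.ext_iff,
      show (t : ℕ) = k + s ↔ (t : ℕ) - k = s by omega]

theorem torusBits_add_half (hk : 1 ≤ k) (p : ZMod (2 * k) × ZMod (2 * k)) :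
    torusBits k (p + ((k : ZMod (2 * k)), (k : ZMod (2 * k)))) = torusBits k p + fun _ => 1 := by
  funext t
  by_cases ht : (t : ℕ) < k
  · simp [torusBits, ht, cycleBits_add_half hk p.1 ht]
  · simp [torusBits, ht, cycleBits_add_half hk p.2 (show (t : ℕ) - k < k by omega)]

def augTorusGridToPC (hk : 1 ≤ k) : augTorusGrid k →g PC k where
  toFun := torusBits k
  map_rel' {a b} h := by
    obtain ⟨d, rfl⟩ : ∃ d, b = a + d := ⟨b - a, by abel⟩
    have hd := (augTorusGrid_adj_iff.mp h).2
    rw [add_sub_cancel_left] at hd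
    rcases hd with rfl | rfl | rfl | rfl | rfl
    · obtain ⟨i, hi⟩ := torusBits_add_one_fst hk a
      exact hi ▸ PC_adj_add_single _ i
    · obtain ⟨i, hi⟩ := torusBits_add_one_fst hk (a + (-1, 0))
      rw [show a + (-1, 0) + (1, 0) = a by simp [add_assoc]] at hi
      exact (hi ▸ PC_adj_add_single _ i).symm
    · obtain ⟨i, hi⟩ := torusBits_add_one_snd hk a
      exact hi ▸ PC_adj_add_single _ i
    · obtain ⟨i, hi⟩ := torusBits_add_one_snd hk (a + (0, -1))
      rw [show a + (0, -1) + (0, 1) = a by simp [add_assoc]] at hi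
      exact (hi ▸ PC_adj_add_single _ i).symm
    · exact torusBits_add_half hk a ▸ PC_adj_add_one hk _

end Embedding

/-- `AT(2k,2k)` is (isomorphic to) a subgraph of `PC(2k)`, has odd-girth exactly
`2k+1`, is vertex-transitive, and every two of its vertices lie on a common
`(2k+1)`-cycle. -/
theorem augTorusGrid_properties (k : ℕ) (hk : 1 ≤ k) :
    (∃ f : augTorusGrid k →g PC k, Function.Injective f) ∧
    hasOddGirth (augTorusGrid k) (2*k+1) ∧
    (∀ u v : ZMod (2*k) × ZMod (2*k),
      ∃ φ : augTorusGrid k ≃g augTorusGrid k, φ u = v) ∧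
    (∀ u v : ZMod (2*k) × ZMod (2*k),
      ∃ (x : ZMod (2*k) × ZMod (2*k)) (w : (augTorusGrid k).Walk x x),
        w.IsCycle ∧ w.length = 2*k+1 ∧ u ∈ w.support ∧ v ∈ w.support) := by
  refine ⟨⟨augTorusGridToPC hk, torusBits_injective hk⟩, ⟨fun x w _ hw => ?_, ?_⟩,
    exists_augTorusGrid_iso_apply_eq, augTorusGrid_onCommonCycle hk⟩
  · simpa using PC_le_length_of_odd (w.map (augTorusGridToPC hk)) (by simpa using hw)
  · obtain ⟨x, w, hw, hlen, -⟩ := augTorusGrid_onCommonCycle hk 0 0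
    exact ⟨x, w, hw, hlen⟩
end
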